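/- arXiv:2311.04478 — 7 statements merged into one kernel-verified Lean document; each statement's English description precedes it below -/
import Mathlib

section
/- Let P₁ and P₂ be k×k complex matrix polynomials of degree p whose coefficient of z^p is the identity matrix I_k, and let U be a k×k matrix polynomial such that det U(z) is a nonzero constant (independent of z). If P₁(z) = P₂(z)·U(z) for all z, then U(z) = I_k identically; in particular P₁ = P₂. -/
open Matrix Polynomial

/-- Evaluation of a `k × k` matrix polynomial (a matrix with polynomial entries) at `z ∈ ℂ`. -/
noncomputable def matPolyEval {k : ℕ} (U : Matrix (Fin k) (Fin k) (Polynomial ℂ))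
    (z : ℂ) : Matrix (Fin k) (Fin k) ℂ :=
  U.map (Polynomial.eval z)

/-- Evaluation at `z ∈ ℂ` of the monic matrix polynomial
`P(z) = I_k z^p + A₁ z^(p-1) + ⋯ + A_p` with coefficients `A i = A_{i+1}`. -/
noncomputable def monicMatPoly {k : ℕ} (p : ℕ) (A : Fin p → Matrix (Fin k) (Fin k) ℂ)
    (z : ℂ) : Matrix (Fin k) (Fin k) ℂ :=
  z ^ p • (1 : Matrix (Fin k) (Fin k) ℂ) + ∑ m : Fin p, z ^ (p - 1 - (m : ℕ)) • A m

/-- The matrix-of-polynomials form of `monicMatPoly`. -/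
noncomputable def monicQ {k : ℕ} (p : ℕ) (A : Fin p → Matrix (Fin k) (Fin k) ℂ) :
    Matrix (Fin k) (Fin k) (Polynomial ℂ) :=
  (X : ℂ[X]) ^ p • (1 : Matrix (Fin k) (Fin k) ℂ[X]) +
    ∑ m : Fin p, (X : ℂ[X]) ^ (p - 1 - (m : ℕ)) • (A m).map C

lemma matPolyEval_monicQ {k p : ℕ} (A : Fin p → Matrix (Fin k) (Fin k) ℂ) (z : ℂ) :
    matPolyEval (monicQ p A) z = monicMatPoly p A z := by
  ext i j
  simp only [matPolyEval, monicQ, monicMatPoly, Matrix.map_apply, Matrix.add_apply,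
    Matrix.smul_apply, Matrix.sum_apply, Matrix.one_apply, Matrix.zero_apply, smul_eq_mul]
  rw [eval_add, eval_finset_sum]
  simp only [eval_mul, eval_pow, eval_X, eval_C, apply_ite (eval z), eval_one, eval_zero]

lemma matPolyEval_mul {k : ℕ} (M N : Matrix (Fin k) (Fin k) (Polynomial ℂ)) (z : ℂ) :
    matPolyEval (M * N) z = matPolyEval M z * matPolyEval N z := by
  simp only [matPolyEval]
  have h : (Polynomial.eval z : ℂ[X] → ℂ) = ⇑(Polynomial.evalRingHom z) := rfl
  rw [h, Matrix.map_mul]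

lemma coeff_X_pow_mul_C (a : ℂ) (e n : ℕ) :
    ((X : ℂ[X]) ^ e * C a).coeff n = if n = e then a else 0 := by
  rw [mul_comm, coeff_C_mul, coeff_X_pow]
  simp [mul_ite]

lemma matPolyEquiv_monicQ_coeff {k p : ℕ} (A : Fin p → Matrix (Fin k) (Fin k) ℂ) (n : ℕ) :
    (matPolyEquiv (monicQ p A)).coeff n =
      (if n = p then (1 : Matrix (Fin k) (Fin k) ℂ) else 0) +
        ∑ m : Fin p, if n = p - 1 - (m : ℕ) then A m else 0 := by
  ext i j
  rw [matPolyEquiv_coeff_apply]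
  simp only [monicQ, Matrix.add_apply, Matrix.sum_apply, Matrix.smul_apply, Matrix.map_apply,
    Matrix.one_apply, smul_eq_mul, coeff_add, finset_sum_coeff, mul_ite, mul_one, mul_zero,
    apply_ite (fun q : ℂ[X] => q.coeff n), coeff_X_pow, coeff_zero, coeff_X_pow_mul_C,
    apply_ite (fun M : Matrix (Fin k) (Fin k) ℂ => M i j), Matrix.zero_apply]
  congr 1
  · split_ifs <;> rfl

/-- If `P₁` and `P₂` are monic `k × k` matrix polynomials of degree `p` with identity leading
coefficient, `U` is a matrix polynomial whose determinant is a nonzero constant, and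
`P₁(z) = P₂(z) · U(z)` for all `z`, then `U = I_k` identically and `P₁ = P₂`. -/
theorem unimodular_factor_of_monic_eq {k p : ℕ}
    (A₁ A₂ : Fin p → Matrix (Fin k) (Fin k) ℂ)
    (U : Matrix (Fin k) (Fin k) (Polynomial ℂ))
    (hU : ∃ c : ℂ, c ≠ 0 ∧ ∀ z : ℂ, (matPolyEval U z).det = c)
    (hfac : ∀ z : ℂ, monicMatPoly p A₁ z = monicMatPoly p A₂ z * matPolyEval U z) :
    U = 1 ∧ A₁ = A₂ := by
  clear hU
  rcases Nat.eq_zero_or_pos k with hk | hk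
  · subst hk
    constructor
    · ext i j; exact i.elim0
    · funext m; ext i j; exact i.elim0
  have hone : (1 : Matrix (Fin k) (Fin k) ℂ) ≠ 0 := by
    intro h
    have := congrFun (congrFun h ⟨0, hk⟩) ⟨0, hk⟩
    simp [Matrix.one_apply] at this
  -- matrix polynomial identity
  have hQ : monicQ p A₁ = monicQ p A₂ * U := by
    apply Matrix.ext; intro i j
    apply Polynomial.funext
    intro z
    have key : matPolyEval (monicQ p A₁) z = matPolyEval (monicQ p A₂ * U) z := by
      rw [matPolyEval_monicQ, matPolyEval_mul, matPolyEval_monicQ, hfac z]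
    have := congrFun (congrFun key i) j
    simpa [matPolyEval, Matrix.map_apply] using this
  set q₁ := matPolyEquiv (monicQ p A₁) with hq₁def
  set q₂ := matPolyEquiv (monicQ p A₂) with hq₂def
  set u := matPolyEquiv U with hudef
  have hq : q₁ = q₂ * u := by rw [hq₁def, hq₂def, hudef, hQ, _root_.map_mul]
  have hc1 : q₁.coeff p = 1 := by
    rw [hq₁def, matPolyEquiv_monicQ_coeff]
    rw [if_pos rfl]
    have : ∀ m : Fin p, (if p = p - 1 - (m : ℕ) then A₁ m else 0) = 0 := by
      intro m; rw [if_neg]; have := m.isLt; omega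
    rw [Finset.sum_congr rfl fun m _ => this m]
    simp
  have hc2 : q₂.coeff p = 1 := by
    rw [hq₂def, matPolyEquiv_monicQ_coeff]
    rw [if_pos rfl]
    have : ∀ m : Fin p, (if p = p - 1 - (m : ℕ) then A₂ m else 0) = 0 := by
      intro m; rw [if_neg]; have := m.isLt; omega
    rw [Finset.sum_congr rfl fun m _ => this m]
    simp
  have hhigh : ∀ (A : Fin p → Matrix (Fin k) (Fin k) ℂ) (n : ℕ), p < n →
      (matPolyEquiv (monicQ p A)).coeff n = 0 := by
    intro A n hn
    rw [matPolyEquiv_monicQ_coeff, if_neg (by omega)]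
    have : ∀ m : Fin p, (if n = p - 1 - (m : ℕ) then A m else 0) = 0 := by
      intro m; rw [if_neg]; have := m.isLt; omega
    rw [Finset.sum_congr rfl fun m _ => this m]
    simp
  have hdeg1 : q₁.degree ≤ (p : ℕ) :=
    (degree_le_iff_coeff_zero _ _).2 fun n hn => hhigh A₁ n (by exact_mod_cast hn)
  have hdeg2 : q₂.degree ≤ (p : ℕ) :=
    (degree_le_iff_coeff_zero _ _).2 fun n hn => hhigh A₂ n (by exact_mod_cast hn)
  have hq2deg : q₂.degree = (p : ℕ) :=
    le_antisymm hdeg2 (le_degree_of_ne_zero (by rw [hc2]; exact hone))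
  have hmq2 : q₂.Monic := by
    have hnat : q₂.natDegree = p := natDegree_eq_of_degree_eq_some hq2deg
    show q₂.leadingCoeff = 1
    rw [Polynomial.leadingCoeff, hnat, hc2]
  have hu0 : u ≠ 0 := by
    intro h
    rw [h, mul_zero] at hq
    apply hone
    rw [← hc1, hq, coeff_zero]
  have hnat : u.natDegree = 0 := by
    have h : (q₂ * u).degree ≤ (p : ℕ) := hq ▸ hdeg1
    rw [hmq2.degree_mul_comm, hmq2.degree_mul, hq2deg, degree_eq_natDegree hu0] at h
    have h3 : u.natDegree + p ≤ p := by exact_mod_cast h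
    omega
  have hu : u = C (u.coeff 0) := eq_C_of_natDegree_le_zero (le_of_eq hnat)
  have h5 : q₁.coeff p = q₂.coeff p * u.coeff 0 := by
    conv_lhs => rw [hq, hu, coeff_mul_C]
  have huc : u.coeff 0 = 1 := by
    rw [hc1, hc2, one_mul] at h5
    exact h5.symm
  have hu1 : u = 1 := by rw [hu, huc, C_1]
  have hU1 : U = 1 := by
    apply matPolyEquiv.injective
    rw [_root_.map_one, ← hudef, hu1]
  refine ⟨hU1, ?_⟩
  have hQQ : monicQ p A₁ = monicQ p A₂ := by rw [hQ, hU1, mul_one]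
  funext m
  have hcm : ∀ A : Fin p → Matrix (Fin k) (Fin k) ℂ,
      (matPolyEquiv (monicQ p A)).coeff (p - 1 - (m : ℕ)) = A m := by
    intro A
    rw [matPolyEquiv_monicQ_coeff, if_neg (by have := m.isLt; omega)]
    rw [Finset.sum_eq_single m]
    · simp
    · intro b _ hb
      rw [if_neg]
      have hb1 := b.isLt; have hm1 := m.isLt
      intro hcontra
      exact hb (Fin.ext (by omega))
    · intro h; exact absurd (Finset.mem_univ m) h
  have := hcm A₂
  rw [← hQQ, hcm A₁] at this
  exact this
end

section
/- Let p > q ≥ 0, let A₁,…,A_p and C₀,…,C_q be k×k real matrices, and let (A,B,C) be the controller canonical triple built from them. Then for every z ∈ ℂ with det P(z) ≠ 0, the matrix z·I_{kp} − A is invertible and C·(z·I_{kp} − A)⁻¹·B = Q(z)·P(z)⁻¹, where P(z) = I_k z^p + A₁ z^{p−1} + ⋯ + A_p and Q(z) = C₀ + C₁ z + ⋯ + C_q z^q. -/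
open Matrix

/-- The block companion matrix in `M_{kp}(ℝ)` with `k × k` identity blocks on the block
superdiagonal, last block row given by `L` (block `(p-1, j)` equals `L j`), and zero blocks
elsewhere. -/
def blockCompanion (p k : ℕ) (L : Fin p → Matrix (Fin k) (Fin k) ℝ) :
    Matrix (Fin p × Fin k) (Fin p × Fin k) ℝ := fun x y =>
  (if (x.1 : ℕ) + 1 = (y.1 : ℕ) then (1 : Matrix (Fin k) (Fin k) ℝ) x.2 y.2 else 0) +
    (if (x.1 : ℕ) = p - 1 then L y.1 x.2 y.2 else 0)

/-- The controller canonical `A`-matrix built from `A₁, …, A_p` (here `A i = A_{i+1}`):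
identity blocks on the block superdiagonal and last block row `(−A_p, −A_{p−1}, …, −A₁)`. -/
def ccA {p k : ℕ} (A : Fin p → Matrix (Fin k) (Fin k) ℝ) :
    Matrix (Fin p × Fin k) (Fin p × Fin k) ℝ :=
  blockCompanion p k (fun j => -(A ⟨p - 1 - (j : ℕ), by have := j.isLt; omega⟩))

/-- The controller canonical `B`-matrix `(0_k, …, 0_k, I_k)ᵀ ∈ M_{kp×k}(ℝ)`. -/
def ccB (p k : ℕ) : Matrix (Fin p × Fin k) (Fin k) ℝ := fun x b =>
  if (x.1 : ℕ) = p - 1 then (1 : Matrix (Fin k) (Fin k) ℝ) x.2 b else 0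

/-- The controller canonical `C`-matrix `(C₀, C₁, …, C_q, 0_k, …, 0_k) ∈ M_{k×kp}(ℝ)`
(here `C m = C_m`). -/
def ccC {q k : ℕ} (p : ℕ) (C : Fin (q + 1) → Matrix (Fin k) (Fin k) ℝ) :
    Matrix (Fin k) (Fin p × Fin k) ℝ := fun a y =>
  if h : (y.1 : ℕ) ≤ q then C ⟨(y.1 : ℕ), by omega⟩ a y.2 else 0

/-- Evaluation at `z ∈ ℂ` of `P(z) = I_k z^p + A₁ z^(p-1) + ⋯ + A_p` (here `A i = A_{i+1}`). -/
noncomputable def monicMatPolyEval {k : ℕ} (p : ℕ) (A : Fin p → Matrix (Fin k) (Fin k) ℝ)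
    (z : ℂ) : Matrix (Fin k) (Fin k) ℂ :=
  z ^ p • (1 : Matrix (Fin k) (Fin k) ℂ) +
    ∑ m : Fin p, z ^ (p - 1 - (m : ℕ)) • (A m).map (algebraMap ℝ ℂ)

/-- Evaluation at `z ∈ ℂ` of `Q(z) = C₀ + C₁ z + ⋯ + C_q z^q` (here `C m = C_m`). -/
noncomputable def maPolyEval {k : ℕ} (q : ℕ) (C : Fin (q + 1) → Matrix (Fin k) (Fin k) ℝ)
    (z : ℂ) : Matrix (Fin k) (Fin k) ℂ :=
  ∑ m : Fin (q + 1), z ^ (m : ℕ) • (C m).map (algebraMap ℝ ℂ)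

lemma sum_delta_nat {p : ℕ} (n : ℕ) (g : Fin p → ℂ) :
    (∑ j : Fin p, if n = (j:ℕ) then g j else 0) = if h : n < p then g ⟨n, h⟩ else 0 := by
  split
  · next h =>
    rw [Finset.sum_eq_single ⟨n, h⟩]
    · simp
    · intro j _ hj
      rw [if_neg]
      intro e
      exact hj (Fin.val_injective e.symm)
    · simp
  · next h =>
    apply Finset.sum_eq_zero
    intro j _
    rw [if_neg]
    intro e
    exact h (e ▸ j.isLt)

lemma ccA_sum {k p : ℕ} (A : Fin p → Matrix (Fin k) (Fin k) ℝ) (x : Fin p × Fin k)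
    (g : Fin p × Fin k → ℂ) :
    ∑ y : Fin p × Fin k, (algebraMap ℝ ℂ) (ccA A x y) * g y =
      (if h : (x.1:ℕ)+1 < p then g (⟨(x.1:ℕ)+1, h⟩, x.2) else 0) +
      (if (x.1:ℕ) = p-1 then -∑ j : Fin p, ∑ c : Fin k,
          (algebraMap ℝ ℂ) ((A ⟨p-1-(j:ℕ), by have := j.isLt; omega⟩) x.2 c) * g (j,c) else 0) := by
  unfold ccA blockCompanion
  rw [Fintype.sum_prod_type]
  simp only [map_add, apply_ite (algebraMap ℝ ℂ), map_zero, Matrix.one_apply,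
    _root_.map_one, add_mul, Finset.sum_add_distrib, ite_mul, zero_mul, one_mul]
  congr 1
  · have inner : ∀ j : Fin p,
        (∑ c : Fin k, if (x.1:ℕ) + 1 = (j:ℕ) then (if x.2 = c then g (j,c) else 0) else 0)
        = if (x.1:ℕ) + 1 = (j:ℕ) then g (j, x.2) else 0 := by
      intro j
      split
      · simp [Finset.sum_ite_eq]
      · simp
    rw [Finset.sum_congr rfl (fun j _ => inner j), sum_delta_nat]
  · split
    · rw [← Finset.sum_neg_distrib]
      apply Finset.sum_congr rfl
      intro j _
      rw [← Finset.sum_neg_distrib]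
      apply Finset.sum_congr rfl
      intro c _
      simp only [Matrix.neg_apply, map_neg]
      ring
    · simp

noncomputable def Xmat (p : ℕ) {k : ℕ} (Pi : Matrix (Fin k) (Fin k) ℂ) (z : ℂ) :
    Matrix (Fin p × Fin k) (Fin k) ℂ := fun x b => z ^ (x.1:ℕ) * Pi x.2 b

lemma rev_reindex {k p : ℕ} (A : Fin p → Matrix (Fin k) (Fin k) ℝ) (z : ℂ)
    (F : Fin k → Fin k → ℂ) (a : Fin k) :
    (∑ j : Fin p, ∑ c : Fin k,
        (algebraMap ℝ ℂ) ((A ⟨p-1-(j:ℕ), by have := j.isLt; omega⟩) a c) * (z^(j:ℕ) * F a c))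
      = ∑ m : Fin p, ∑ c : Fin k,
        z^(p-1-(m:ℕ)) * (algebraMap ℝ ℂ) ((A m) a c) * F a c := by
  apply Fintype.sum_bijective Fin.rev Fin.rev_bijective
  intro j
  have hv : ((Fin.rev j : Fin p) : ℕ) = p - 1 - (j:ℕ) := by
    rw [Fin.val_rev]; omega
  have hz : z ^ (p - 1 - ((Fin.rev j : Fin p) : ℕ)) = z ^ (j:ℕ) := by
    rw [hv]; congr 1; have := j.isLt; omega
  have hA : A (Fin.rev j) = A ⟨p-1-(j:ℕ), by have := j.isLt; omega⟩ := by
    exact congrArg A (Fin.ext hv)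
  rw [hz, hA]
  apply Finset.sum_congr rfl
  intro c _
  ring

lemma key_mul {k p : ℕ} (hp : 0 < p) (A : Fin p → Matrix (Fin k) (Fin k) ℝ) (z : ℂ)
    (hz : (monicMatPolyEval p A z).det ≠ 0) :
    (z • (1 : Matrix (Fin p × Fin k) (Fin p × Fin k) ℂ) - (ccA A).map (algebraMap ℝ ℂ)) *
      Xmat p (monicMatPolyEval p A z)⁻¹ z = (ccB p k).map (algebraMap ℝ ℂ) := by
  have hPP : monicMatPolyEval p A z * (monicMatPolyEval p A z)⁻¹ = 1 :=
    Matrix.mul_nonsing_inv _ (isUnit_iff_ne_zero.2 hz)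
  set Pi := (monicMatPolyEval p A z)⁻¹ with hPi
  ext x b
  rw [Matrix.mul_apply]
  simp only [Matrix.sub_apply, Matrix.smul_apply, Matrix.map_apply, smul_eq_mul, sub_mul,
    Finset.sum_sub_distrib]
  have h1 : ∑ y : Fin p × Fin k, z * (1 : Matrix (Fin p × Fin k) (Fin p × Fin k) ℂ) x y *
      Xmat p Pi z y b = z * Xmat p Pi z x b := by
    simp [Matrix.one_apply, ite_mul, zero_mul, mul_assoc, Finset.sum_ite_eq]
  rw [h1, ccA_sum]
  by_cases hx : (x.1:ℕ) = p - 1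
  · have hnd : ¬ ((x.1:ℕ) + 1 < p) := by omega
    rw [dif_neg hnd, if_pos hx]
    have hrhs : (algebraMap ℝ ℂ) (ccB p k x b) = (1 : Matrix (Fin k) (Fin k) ℂ) x.2 b := by
      simp [ccB, hx, Matrix.one_apply, apply_ite (algebraMap ℝ ℂ)]
    rw [hrhs, ← hPP, Matrix.mul_apply]
    have hexp : ∀ c, monicMatPolyEval p A z x.2 c =
        z^p * (if x.2 = c then 1 else 0) +
          ∑ m : Fin p, z^(p-1-(m:ℕ)) * (algebraMap ℝ ℂ) ((A m) x.2 c) := by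
      intro c
      simp [monicMatPolyEval, Matrix.add_apply, Matrix.smul_apply, Matrix.sum_apply,
        Matrix.one_apply, Matrix.map_apply, smul_eq_mul]
    simp only [hexp, add_mul, Finset.sum_add_distrib, mul_ite, mul_one, mul_zero, ite_mul,
      zero_mul, Finset.sum_mul]
    rw [Finset.sum_ite_eq]
    have hXsimp : ∀ (j : Fin p) (c : Fin k), Xmat p Pi z (j, c) b = z^(j:ℕ) * Pi c b :=
      fun j c => rfl
    simp only [hXsimp]
    rw [rev_reindex A z (fun _ c => Pi c b) x.2]
    rw [Finset.sum_comm]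
    simp only [Finset.mem_univ, if_pos]
    rw [hx]
    have hzp : z * z^(p-1) = z^p := by
      rw [← pow_succ']
      congr 1
      omega
    linear_combination Pi x.2 b * hzp
  · have hd : (x.1:ℕ) + 1 < p := by have := x.1.isLt; omega
    rw [dif_pos hd, if_neg hx]
    have hrhs : (algebraMap ℝ ℂ) (ccB p k x b) = 0 := by simp [ccB, hx]
    rw [hrhs]
    show z * Xmat p Pi z x b - (Xmat p Pi z (⟨(x.1:ℕ)+1, hd⟩, x.2) b + 0) = 0
    simp only [Xmat, add_zero]
    rw [← mul_assoc, ← pow_succ']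
    simp

lemma det_ne {k p : ℕ} (hp : 0 < p) (A : Fin p → Matrix (Fin k) (Fin k) ℝ) (z : ℂ)
    (hz : (monicMatPolyEval p A z).det ≠ 0) :
    (z • (1 : Matrix (Fin p × Fin k) (Fin p × Fin k) ℂ) -
      (ccA A).map (algebraMap ℝ ℂ)).det ≠ 0 := by
  intro hdet
  obtain ⟨v, hv, hMv⟩ := Matrix.exists_mulVec_eq_zero_iff.2 hdet
  have heq : ∀ x : Fin p × Fin k,
      z * v x - ((if h : (x.1:ℕ)+1 < p then v (⟨(x.1:ℕ)+1, h⟩, x.2) else 0) +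
        (if (x.1:ℕ) = p-1 then -∑ j : Fin p, ∑ c : Fin k,
          (algebraMap ℝ ℂ) ((A ⟨p-1-(j:ℕ), by have := j.isLt; omega⟩) x.2 c) * v (j,c) else 0))
        = 0 := by
    intro x
    have h0 := congrFun hMv x
    rw [Matrix.mulVec, dotProduct] at h0
    simp only [Matrix.sub_apply, Matrix.smul_apply, Matrix.map_apply, smul_eq_mul, sub_mul,
      Finset.sum_sub_distrib] at h0
    have h1 : ∑ y : Fin p × Fin k, z * (1 : Matrix (Fin p × Fin k) (Fin p × Fin k) ℂ) x y *
        v y = z * v x := by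
      simp [Matrix.one_apply, ite_mul, zero_mul, mul_assoc, Finset.sum_ite_eq]
    rw [h1, ccA_sum] at h0
    exact h0
  have step : ∀ (i : ℕ) (h : i + 1 < p) (a : Fin k),
      v (⟨i+1, h⟩, a) = z * v (⟨i, by omega⟩, a) := by
    intro i h a
    have := heq (⟨i, by omega⟩, a)
    rw [dif_pos h, if_neg (by simp; omega)] at this
    simp only [add_zero] at this
    linear_combination -this
  have vpow : ∀ (i : ℕ) (h : i < p) (a : Fin k),
      v (⟨i, h⟩, a) = z ^ i * v (⟨0, hp⟩, a) := by
    intro i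
    induction i with
    | zero => intro h a; simp
    | succ n ih =>
      intro h a
      rw [step n h a, ih (by omega) a]
      ring
  set w : Fin k → ℂ := fun a => v (⟨0, hp⟩, a) with hw
  have hvw : ∀ (j : Fin p) (c : Fin k), v (j, c) = z ^ (j:ℕ) * w c := by
    intro j c
    have := vpow (j:ℕ) j.isLt c
    rwa [Fin.eta] at this
  have hPw : monicMatPolyEval p A z *ᵥ w = 0 := by
    funext a
    have hlast := heq (⟨p-1, by omega⟩, a)
    rw [dif_neg (by simp; omega), if_pos (by simp)] at hlast
    simp only [zero_add, sub_neg_eq_add] at hlast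
    simp only [hvw] at hlast
    rw [rev_reindex A z (fun _ c => w c) a] at hlast
    have hexp : ∀ c, monicMatPolyEval p A z a c =
        z^p * (if a = c then 1 else 0) +
          ∑ m : Fin p, z^(p-1-(m:ℕ)) * (algebraMap ℝ ℂ) ((A m) a c) := by
      intro c
      simp [monicMatPolyEval, Matrix.add_apply, Matrix.smul_apply, Matrix.sum_apply,
        Matrix.one_apply, Matrix.map_apply, smul_eq_mul]
    rw [Matrix.mulVec, dotProduct]
    simp only [hexp, add_mul, Finset.sum_add_distrib, mul_ite, mul_one, mul_zero, ite_mul,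
      zero_mul, Finset.sum_mul]
    rw [Finset.sum_ite_eq]
    simp only [Finset.mem_univ, if_pos, Pi.zero_apply]
    rw [Finset.sum_comm] at hlast
    have hzp : z * z^(p-1) = z^p := by
      rw [← pow_succ']
      congr 1
      omega
    linear_combination hlast - w a * hzp
  have hwne : w ≠ 0 := by
    intro hw0
    apply hv
    funext x
    obtain ⟨⟨i, hi⟩, a⟩ := x
    rw [vpow i hi a, show v (⟨0, hp⟩, a) = (0:ℂ) from congrFun hw0 a]
    simp
  exact hz (Matrix.exists_mulVec_eq_zero_iff.1 ⟨w, hwne, hPw⟩)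

lemma CX {k p q : ℕ} (hpq : q < p) (C : Fin (q + 1) → Matrix (Fin k) (Fin k) ℝ)
    (Pi : Matrix (Fin k) (Fin k) ℂ) (z : ℂ) :
    (ccC p C).map (algebraMap ℝ ℂ) * Xmat p Pi z = maPolyEval q C z * Pi := by
  ext a b
  rw [Matrix.mul_apply, Fintype.sum_prod_type]
  have hterm : ∀ j : Fin p, (∑ c : Fin k,
      ((ccC p C).map (algebraMap ℝ ℂ)) a (j, c) * Xmat p Pi z (j, c) b) =
      (fun n : ℕ => if h : n ≤ q then
        (∑ c : Fin k, (algebraMap ℝ ℂ) (C ⟨n, Nat.lt_succ_of_le h⟩ a c) * (z^n * Pi c b))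
        else 0) (j : ℕ) := by
    intro j
    simp only [ccC, Matrix.map_apply, Xmat]
    by_cases h : (j:ℕ) ≤ q
    · rw [dif_pos h]
      apply Finset.sum_congr rfl
      intro c _
      rw [dif_pos h]
    · rw [dif_neg h]
      simp [h]
  rw [Finset.sum_congr rfl (fun j _ => hterm j),
    Fin.sum_univ_eq_sum_range (fun n : ℕ => if h : n ≤ q then
        (∑ c : Fin k, (algebraMap ℝ ℂ) (C ⟨n, Nat.lt_succ_of_le h⟩ a c) * (z^n * Pi c b))
        else 0) p]
  rw [← Finset.sum_subset (Finset.range_subset_range.2 hpq) (fun n _ hn => by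
      rw [dif_neg (by simpa using hn)])]
  rw [← Fin.sum_univ_eq_sum_range (fun n : ℕ => if h : n ≤ q then
        (∑ c : Fin k, (algebraMap ℝ ℂ) (C ⟨n, Nat.lt_succ_of_le h⟩ a c) * (z^n * Pi c b))
        else 0) (q+1)]
  have hterm2 : ∀ m : Fin (q+1), (fun n : ℕ => if h : n ≤ q then
        (∑ c : Fin k, (algebraMap ℝ ℂ) (C ⟨n, Nat.lt_succ_of_le h⟩ a c) * (z^n * Pi c b))
        else 0) (m : ℕ) =
      ∑ c : Fin k, z^(m:ℕ) * (algebraMap ℝ ℂ) (C m a c) * Pi c b := by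
    intro m
    beta_reduce
    rw [dif_pos (Nat.lt_succ_iff.1 m.isLt)]
    apply Finset.sum_congr rfl
    intro c _
    rw [Fin.eta]
    ring
  rw [Finset.sum_congr rfl (fun m _ => hterm2 m), Matrix.mul_apply]
  rw [Finset.sum_comm]
  apply Finset.sum_congr rfl
  intro c _
  rw [maPolyEval, Matrix.sum_apply, Finset.sum_mul]
  apply Finset.sum_congr rfl
  intro m _
  simp [Matrix.smul_apply, Matrix.map_apply, smul_eq_mul, mul_assoc]

/-- Realization identity for the controller canonical form: for every `z ∈ ℂ` with
`det P(z) ≠ 0`, the matrix `z I_{kp} − A` is invertible and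
`C (z I_{kp} − A)⁻¹ B = Q(z) P(z)⁻¹`. -/
theorem controller_canonical_transfer_function {k p q : ℕ} (hpq : q < p)
    (A : Fin p → Matrix (Fin k) (Fin k) ℝ)
    (C : Fin (q + 1) → Matrix (Fin k) (Fin k) ℝ)
    (z : ℂ) (hz : (monicMatPolyEval p A z).det ≠ 0) :
    IsUnit (z • (1 : Matrix (Fin p × Fin k) (Fin p × Fin k) ℂ) -
        (ccA A).map (algebraMap ℝ ℂ)) ∧
      (ccC p C).map (algebraMap ℝ ℂ) *
          (z • (1 : Matrix (Fin p × Fin k) (Fin p × Fin k) ℂ) -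
            (ccA A).map (algebraMap ℝ ℂ))⁻¹ *
          (ccB p k).map (algebraMap ℝ ℂ) =
        maPolyEval q C z * (monicMatPolyEval p A z)⁻¹ := by
  have hp : 0 < p := Nat.lt_of_le_of_lt (Nat.zero_le q) hpq
  have hdet := det_ne hp A z hz
  set M := z • (1 : Matrix (Fin p × Fin k) (Fin p × Fin k) ℂ) -
      (ccA A).map (algebraMap ℝ ℂ) with hM
  have hU : IsUnit M := (Matrix.isUnit_iff_isUnit_det M).2 (isUnit_iff_ne_zero.2 hdet)
  refine ⟨hU, ?_⟩
  have hMX := key_mul hp A z hz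
  have hXinv : M⁻¹ * ((ccB p k).map (algebraMap ℝ ℂ)) =
      Xmat p (monicMatPolyEval p A z)⁻¹ z := by
    rw [← hMX, ← Matrix.mul_assoc,
      Matrix.nonsing_inv_mul M ((Matrix.isUnit_iff_isUnit_det M).1 hU), Matrix.one_mul]
  rw [Matrix.mul_assoc, hXinv, CX hpq]
end

section
/- Let p*, p ≥ 1, 0 ≤ q* < p*, 0 ≤ q < p, and let P*(z) = I_k z^{p*} + P₁ z^{p*−1} + ⋯ + P_{p*}, Q*(z) = Q₀ z^{q*} + Q₁ z^{q*−1} + ⋯ + Q_{q*} with Q₀ ≠ 0, and P(z) = I_k z^p + A₁ z^{p−1} + ⋯ + A_p, Q(z) = C₀ + C₁ z + ⋯ + C_q z^q with C_q ≠ 0, all coefficients being k×k real matrices. Assume (P*,Q*) is left coprime and (P,Q) is right coprime, and that P*(z)⁻¹·Q*(z) = Q(z)·P(z)⁻¹ for every z ∈ ℂ with det P*(z) ≠ 0 and det P(z) ≠ 0. Then p = p*, q = q*, the leading coefficient Q₀ of Q* equals C_q, {z ∈ ℂ : det P*(z) = 0} = {z ∈ ℂ : det P(z) = 0}, and {z ∈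 ℂ : det Q*(z) = 0} = {z ∈ ℂ : det Q(z) = 0}. -/
open Matrix

/-- Evaluation at `z ∈ ℂ` of `Q*(z) = Q₀ z^{q*} + Q₁ z^{q*-1} + ⋯ + Q_{q*}`
(here `Q m = Q_m`). -/
noncomputable def maPolyEvalDesc {k : ℕ} (q : ℕ) (Q : Fin (q + 1) → Matrix (Fin k) (Fin k) ℝ)
    (z : ℂ) : Matrix (Fin k) (Fin k) ℂ :=
  ∑ m : Fin (q + 1), z ^ (q - (m : ℕ)) • (Q m).map (algebraMap ℝ ℂ)

/-- Evaluation at `z ∈ ℂ` of `Q(z) = C₀ + C₁ z + ⋯ + C_q z^q` (here `C m = C_m`). -/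
noncomputable def maPolyEvalAsc {k : ℕ} (q : ℕ) (C : Fin (q + 1) → Matrix (Fin k) (Fin k) ℝ)
    (z : ℂ) : Matrix (Fin k) (Fin k) ℂ :=
  ∑ m : Fin (q + 1), z ^ (m : ℕ) • (C m).map (algebraMap ℝ ℂ)

/-- The pair `(P, Q)` is right coprime: for every `z ∈ ℂ` the `2k × k` matrix obtained by
stacking `P(z)` on top of `Q(z)` has rank `k`. -/
def RightCoprimeEval {k : ℕ} (P Q : ℂ → Matrix (Fin k) (Fin k) ℂ) : Prop :=
  ∀ z : ℂ, (Matrix.fromRows (P z) (Q z)).rank = k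

/-- The pair `(P*, Q*)` is left coprime: for every `z ∈ ℂ` the `k × 2k` matrix
`(P*(z), Q*(z))` has rank `k`. -/
def LeftCoprimeEval {k : ℕ} (P Q : ℂ → Matrix (Fin k) (Fin k) ℂ) : Prop :=
  ∀ z : ℂ, (Matrix.fromCols (P z) (Q z)).rank = k

/-! The identity `P*⁻¹ Q* = Q P⁻¹` clears to the polynomial identity `Q* P = P* Q`, since the two
sides agree off the finitely many zeros of `det P · det P*`. Comparing leading terms (both `P`
and `P*` are monic) gives `q* + p = p* + q` and `Q₀ = C_q`. Multiplication by `Q*` maps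
`ℂ[X]ᵏ / P ℂ[X]ᵏ`, a complex vector space of dimension `k p`, injectively into
`ℂ[X]ᵏ / P* ℂ[X]ᵏ` of dimension `k p*`: right coprimeness lets one cancel common factors
`X - z` from `P u` and `Q u`. The transposed argument uses left coprimeness, so `p = p*`. Finally,
at each `z`, a null vector of `P(z)` is mapped by `Q(z)` to a nonzero null vector of `P*(z)`,
and symmetrically for the other three inclusions. -/

open Polynomial

namespace Matrix

/-- `A = X ^ d • 1 + (terms of degree < d)`. -/
structure IsMonicOfDegree {n R : Type*} [DecidableEq n] [Semiring R] (A : Matrix n n R[X])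
    (d : ℕ) : Prop where
  natDegree_le : ∀ i j, (A i j).natDegree ≤ d
  coeff_eq : ∀ i j, (A i j).coeff d = (1 : Matrix n n R) i j

theorem isMonicOfDegree_of_monic {n R : Type*} [Fintype n] [DecidableEq n] [CommSemiring R]
    {A : Matrix n n R[X]} (hA : (matPolyEquiv A).Monic) :
    A.IsMonicOfDegree (matPolyEquiv A).natDegree where
  natDegree_le i j := natDegree_le_iff_coeff_eq_zero.mpr fun e he => by
    rw [← matPolyEquiv_coeff_apply, coeff_eq_zero_of_natDegree_lt he, zero_apply]
  coeff_eq i j := by rw [← matPolyEquiv_coeff_apply, ← leadingCoeff, hA.leadingCoeff]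

namespace IsMonicOfDegree

section CommRing

variable {n R : Type*} [DecidableEq n] [CommRing R] {A : Matrix n n R[X]} {d : ℕ}

theorem transpose (hA : A.IsMonicOfDegree d) : Aᵀ.IsMonicOfDegree d :=
  ⟨fun i j => hA.natDegree_le j i, fun i j => by
    rw [transpose_apply, hA.coeff_eq, ← transpose_apply (1 : Matrix n n R), transpose_one]⟩

variable [Fintype n]

theorem natDegree_mulVec_le (hA : A.IsMonicOfDegree d) {e : ℕ} {u : n → R[X]}
    (hu : ∀ j, (u j).natDegree ≤ e) (i : n) : ((A *ᵥ u) i).natDegree ≤ d + e :=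
  natDegree_sum_le_of_forall_le _ _ fun j _ => natDegree_mul_le_of_le (hA.natDegree_le i j) (hu j)

theorem coeff_mulVec (hA : A.IsMonicOfDegree d) {e : ℕ} {u : n → R[X]}
    (hu : ∀ j, (u j).natDegree ≤ e) (i : n) : ((A *ᵥ u) i).coeff (d + e) = (u i).coeff e := by
  simp only [mulVec, dotProduct, finsetSum_coeff,
    coeff_mul_add_eq_of_natDegree_le (hA.natDegree_le i _) (hu _), hA.coeff_eq, one_apply,
    ite_mul, one_mul, zero_mul, Finset.sum_ite_eq, Finset.mem_univ, if_true]

theorem eq_zero_of_degree_mulVec_lt (hA : A.IsMonicOfDegree d) {u : n → R[X]}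
    (hu : ∀ i, ((A *ᵥ u) i).degree < d) : u = 0 := by
  by_contra hne
  obtain ⟨j, hj⟩ : ∃ j, u j ≠ 0 := by simpa [funext_iff] using hne
  obtain ⟨i, -, hmax⟩ :=
    Finset.univ.exists_max_image (fun j => (u j).degree) ⟨j, Finset.mem_univ j⟩
  have hi : u i ≠ 0 := fun h => hj (degree_eq_bot.mp (by simpa [h] using hmax j (by simp)))
  -- the coefficient of `X ^ (d + deg (u i))` in `(A *ᵥ u) i` is the leading coefficient of `u i`
  have hcoeff := hA.coeff_mulVec (fun j => natDegree_le_natDegree (hmax j (by simp))) i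
  rw [coeff_eq_zero_of_degree_lt ((hu i).trans_le (by exact_mod_cast Nat.le_add_right _ _))]
    at hcoeff
  exact hi (leadingCoeff_eq_zero.mp hcoeff.symm)

theorem mulVec_injective (hA : A.IsMonicOfDegree d) : Function.Injective A.mulVec :=
  fun u v h => sub_eq_zero.mp (hA.eq_zero_of_degree_mulVec_lt (by simp [mulVec_sub, h]))

theorem det_ne_zero [IsDomain R] (hA : A.IsMonicOfDegree d) : A.det ≠ 0 := by
  intro h
  obtain ⟨v, hv, hAv⟩ := exists_mulVec_eq_zero_iff.mpr h
  exact hv (hA.mulVec_injective (by rw [hAv, mulVec_zero]))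

theorem exists_sub_mulVec_mem_degreeLT (hA : A.IsMonicOfDegree d) (v : n → R[X]) :
    ∃ u, ∀ i, (v - A *ᵥ u) i ∈ degreeLT R d := by
  obtain ⟨N, hN⟩ : ∃ N : ℕ, ∀ i, (v i).degree < N :=
    ⟨Finset.univ.sup (fun i => (v i).natDegree) + 1, fun i => degree_le_natDegree.trans_lt <| by
      exact_mod_cast Nat.lt_succ_of_le (Finset.le_sup (f := fun i => (v i).natDegree) (by simp))⟩
  induction N generalizing v with
  | zero => exact ⟨0, fun i => mem_degreeLT.mpr (by simpa using (hN i).trans_le (by simp))⟩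
  | succ N ih =>
    rcases lt_or_ge N d with hNd | hNd
    · exact ⟨0, fun i => mem_degreeLT.mpr (by simpa using (hN i).trans_le (by exact_mod_cast hNd))⟩
    -- `A *ᵥ u₀` has the same coefficient of `X ^ N` as `v`
    set u₀ : n → R[X] := fun i => monomial (N - d) ((v i).coeff N)
    have hu₀ : ∀ i, (u₀ i).natDegree ≤ N - d := fun i => natDegree_monomial_le _
    have hdN : d + (N - d) = N := by omega
    obtain ⟨u, hu⟩ := ih (v - A *ᵥ u₀) fun i => by
      rw [degree_lt_iff_coeff_zero]
      intro e he
      rw [Pi.sub_apply, coeff_sub]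
      rcases he.eq_or_lt with rfl | he
      · rw [← hdN, hA.coeff_mulVec hu₀, hdN, coeff_monomial, if_pos rfl, sub_self]
      · rw [coeff_eq_zero_of_degree_lt ((hN i).trans_le (by exact_mod_cast he)),
          coeff_eq_zero_of_natDegree_lt ((hA.natDegree_mulVec_le hu₀ i).trans_lt (by omega)),
          sub_zero]
    exact ⟨u₀ + u, by simpa [mulVec_add, sub_add_eq_sub_sub] using hu⟩

end CommRing

section Field

variable {n K : Type*} [Fintype n] [DecidableEq n] [Field K] {A : Matrix n n K[X]} {d : ℕ}

theorem bijective_mkQ_comp_piMap_subtype (hA : A.IsMonicOfDegree d) :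
    Function.Bijective ((LinearMap.range A.mulVecLin).mkQ.restrictScalars K ∘ₗ
      LinearMap.piMap fun _ => (degreeLT K d).subtype) := by
  constructor
  · rw [← LinearMap.ker_eq_bot, LinearMap.ker_eq_bot']
    intro c hc
    obtain ⟨u, hu⟩ := (Submodule.Quotient.mk_eq_zero _).mp hc
    have hu0 : u = 0 := hA.eq_zero_of_degree_mulVec_lt fun i => by
      rw [mulVecLin_apply] at hu
      exact mem_degreeLT.mp (hu ▸ (c i).2)
    funext i
    simpa [hu0] using congrFun hu.symm i
  · intro x
    obtain ⟨v, rfl⟩ := Submodule.Quotient.mk_surjective _ x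
    obtain ⟨u, hu⟩ := hA.exists_sub_mulVec_mem_degreeLT v
    refine ⟨fun i => ⟨_, hu i⟩, (Submodule.Quotient.eq _).mpr ?_⟩
    exact ⟨-u, by ext i : 1; simp [mulVec_neg]⟩

theorem finiteDimensional_quotient_range (hA : A.IsMonicOfDegree d) :
    FiniteDimensional K ((n → K[X]) ⧸ LinearMap.range A.mulVecLin) :=
  Module.Finite.equiv (LinearEquiv.ofBijective _ hA.bijective_mkQ_comp_piMap_subtype)

theorem finrank_quotient_range (hA : A.IsMonicOfDegree d) :
    Module.finrank K ((n → K[X]) ⧸ LinearMap.range A.mulVecLin) = Fintype.card n * d := by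
  rw [← (LinearEquiv.ofBijective _ hA.bijective_mkQ_comp_piMap_subtype).finrank_eq,
    Module.finrank_pi_fintype, (degreeLTEquiv K d).finrank_eq]
  simp

end Field

end IsMonicOfDegree

section Descent

variable {m n K : Type*} [Fintype n] [Field K] {M : Matrix m n K[X]}

theorem mem_range_mulVecLin_of_X_sub_C_smul_mem {z : K}
    (hM : ∀ x, M.map (eval z) *ᵥ x = 0 → x = 0) {v : m → K[X]}
    (h : (X - C z) • v ∈ LinearMap.range M.mulVecLin) : v ∈ LinearMap.range M.mulVecLin := by
  obtain ⟨u, hu⟩ := h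
  rw [mulVecLin_apply] at hu
  have hroot : ∀ j, (u j).IsRoot z := fun j => congrFun (hM (eval z ∘ u) (funext fun i => by
    simpa [hu] using (RingHom.map_mulVec (evalRingHom z) M u i).symm)) j
  refine ⟨fun j => u j /ₘ (X - C z), smul_right_injective _ (X_sub_C_ne_zero z) ?_⟩
  simp only [mulVecLin_apply, ← mulVec_smul, ← hu]
  congr 1
  funext j
  exact mul_divByMonic_eq_iff_isRoot.mpr (hroot j)

theorem mem_range_mulVecLin_of_smul_mem [IsAlgClosed K]
    (hM : ∀ z x, M.map (eval z) *ᵥ x = 0 → x = 0) {f : K[X]} (hf : f ≠ 0) {v : m → K[X]}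
    (h : f • v ∈ LinearMap.range M.mulVecLin) : v ∈ LinearMap.range M.mulVecLin := by
  have hunit : IsUnit (C f.leadingCoeff) := isUnit_C.mpr (leadingCoeff_ne_zero.mpr hf).isUnit
  rw [← C_leadingCoeff_mul_prod_multiset_X_sub_C (p := f) IsAlgClosed.card_roots_eq_natDegree,
    mul_smul, Submodule.smul_mem_iff_of_isUnit _ hunit] at h
  generalize f.roots = s at h
  induction s using Multiset.induction generalizing v with
  | empty => simpa using h
  | cons a s ih =>
    rw [Multiset.map_cons, Multiset.prod_cons, mul_smul] at h
    exact ih (mem_range_mulVecLin_of_X_sub_C_smul_mem (hM a) h)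

end Descent

section Cokernel

variable {n K : Type*} [Fintype n] [DecidableEq n] [Field K] [IsAlgClosed K]
  {P Q P' Q' : Matrix n n K[X]}

theorem mem_range_mulVecLin_of_mul_eq_mul
    (hright : ∀ z v, P.map (eval z) *ᵥ v = 0 → Q.map (eval z) *ᵥ v = 0 → v = 0)
    (hP : P.det ≠ 0) (hP' : Function.Injective P'.mulVec) (h : Q' * P = P' * Q) {v : n → K[X]}
    (hv : Q' *ᵥ v ∈ LinearMap.range P'.mulVecLin) : v ∈ LinearMap.range P.mulVecLin := by
  obtain ⟨w, hw⟩ := hv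
  rw [mulVecLin_apply] at hw
  -- `fromRows P Q` maps `adj P v` to `det P • (v, w)`; the descent lemma cancels `det P`.
  have hPv : P *ᵥ (P.adjugate *ᵥ v) = P.det • v := by
    rw [mulVec_mulVec, mul_adjugate, smul_mulVec, one_mulVec]
  have hQv : Q *ᵥ (P.adjugate *ᵥ v) = P.det • w := hP' <| by
    rw [mulVec_mulVec, ← h, ← mulVec_mulVec, hPv, mulVec_smul, mulVec_smul, hw]
  have hright' : ∀ z v, (fromRows P Q).map (eval z) *ᵥ v = 0 → v = 0 := fun z v hv => by
    rw [fromRows_map, fromRows_mulVec] at hv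
    exact hright z v (funext fun i => congrFun hv (Sum.inl i))
      (funext fun i => congrFun hv (Sum.inr i))
  obtain ⟨u, hu⟩ := mem_range_mulVecLin_of_smul_mem hright' hP (v := Sum.elim v w)
    ⟨P.adjugate *ᵥ v, by rw [mulVecLin_apply, fromRows_mulVec, hPv, hQv]; ext (i | i) <;> rfl⟩
  exact ⟨u, funext fun i => by simpa [fromRows_mulVec] using congrFun hu (Sum.inl i)⟩

theorem IsMonicOfDegree.le_of_mul_eq_mul [Nonempty n] {d d' : ℕ} (hP : P.IsMonicOfDegree d)
    (hP' : P'.IsMonicOfDegree d')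
    (hright : ∀ z v, P.map (eval z) *ᵥ v = 0 → Q.map (eval z) *ᵥ v = 0 → v = 0)
    (h : Q' * P = P' * Q) : d ≤ d' := by
  have hle : LinearMap.range P.mulVecLin ≤ (LinearMap.range P'.mulVecLin).comap Q'.mulVecLin := by
    rintro _ ⟨u, rfl⟩
    exact ⟨Q *ᵥ u, by simp only [mulVecLin_apply, mulVec_mulVec, h]⟩
  have := hP'.finiteDimensional_quotient_range
  have hfin := LinearMap.finrank_le_finrank_of_injective
    (f := ((LinearMap.range P.mulVecLin).mapQ _ Q'.mulVecLin hle).restrictScalars K) <| by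
    rw [← LinearMap.ker_eq_bot, LinearMap.ker_eq_bot']
    intro x hx
    obtain ⟨v, rfl⟩ := Submodule.Quotient.mk_surjective _ x
    exact (Submodule.Quotient.mk_eq_zero _).mpr <| mem_range_mulVecLin_of_mul_eq_mul hright
      hP.det_ne_zero hP'.mulVec_injective h ((Submodule.Quotient.mk_eq_zero _).mp hx)
  rw [hP.finrank_quotient_range, hP'.finrank_quotient_range] at hfin
  exact Nat.le_of_mul_le_mul_left hfin Fintype.card_pos

theorem IsMonicOfDegree.eq_of_mul_eq_mul [Nonempty n] {d d' : ℕ}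
    (hP : P.IsMonicOfDegree d) (hP' : P'.IsMonicOfDegree d')
    (hright : ∀ z v, P.map (eval z) *ᵥ v = 0 → Q.map (eval z) *ᵥ v = 0 → v = 0)
    (hleft : ∀ z w, w ᵥ* P'.map (eval z) = 0 → w ᵥ* Q'.map (eval z) = 0 → w = 0)
    (h : Q' * P = P' * Q) : d = d' :=
  le_antisymm (hP.le_of_mul_eq_mul hP' hright h) <|
    hP'.transpose.le_of_mul_eq_mul (Q := Q'ᵀ) (Q' := Qᵀ) hP.transpose
      (fun z w => by simpa only [transpose_map, mulVec_transpose] using hleft z w)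
      (by rw [← transpose_mul, ← transpose_mul, h])

end Cokernel

section Scalar

variable {m n K : Type*} [Fintype n] [Field K]

theorem eq_zero_of_rank_eq_card {M : Matrix m n K} (h : M.rank = Fintype.card n) {v : n → K}
    (hv : M *ᵥ v = 0) : v = 0 := by
  have hker : Module.finrank K (LinearMap.ker M.mulVecLin) = 0 := by
    have := LinearMap.finrank_range_add_finrank_ker M.mulVecLin
    rw [Module.finrank_fintype_fun_eq_card] at this
    unfold rank at h
    omega
  simpa [Submodule.finrank_eq_zero.mp hker] using (LinearMap.mem_ker.mpr hv :
    v ∈ LinearMap.ker M.mulVecLin)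

theorem eq_zero_of_rank_fromRows_eq_card {m' : Type*} {X : Matrix m n K} {Y : Matrix m' n K}
    (h : (fromRows X Y).rank = Fintype.card n) {v : n → K} (hX : X *ᵥ v = 0) (hY : Y *ᵥ v = 0) :
    v = 0 :=
  eq_zero_of_rank_eq_card h (by rw [fromRows_mulVec, hX, hY]; ext (i | i) <;> rfl)

theorem eq_zero_of_rank_fromCols_eq_card [Fintype m] {m' : Type*} [Fintype m'] {X : Matrix m n K}
    {Y : Matrix m m' K} (h : (fromCols X Y).rank = Fintype.card m) {w : m → K}
    (hX : w ᵥ* X = 0) (hY : w ᵥ* Y = 0) : w = 0 :=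
  eq_zero_of_rank_fromRows_eq_card (X := Xᵀ) (Y := Yᵀ)
    (by rwa [← transpose_fromCols, rank_transpose])
    (by rwa [mulVec_transpose]) (by rwa [mulVec_transpose])

variable [DecidableEq n]

theorem mul_eq_mul_of_nonsing_inv_mul_eq {X Y M N : Matrix n n K} (hX : X.det ≠ 0)
    (hY : Y.det ≠ 0) (h : X⁻¹ * M = N * Y⁻¹) : M * Y = X * N :=
  calc M * Y = X * (X⁻¹ * M) * Y := by rw [mul_nonsing_inv_cancel_left _ _ hX.isUnit]
    _ = X * N := by rw [h, Matrix.mul_assoc X, nonsing_inv_mul_cancel_right _ _ hY.isUnit]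

theorem det_eq_zero_iff_of_mul_eq_mul {P Q P' Q' : Matrix n n K} (h : Q' * P = P' * Q)
    (hright : ∀ v, P *ᵥ v = 0 → Q *ᵥ v = 0 → v = 0)
    (hleft : ∀ w, w ᵥ* P' = 0 → w ᵥ* Q' = 0 → w = 0) : P.det = 0 ↔ P'.det = 0 := by
  constructor
  · intro hP
    obtain ⟨v, hv, hPv⟩ := exists_mulVec_eq_zero_iff.mpr hP
    refine exists_mulVec_eq_zero_iff.mp ⟨Q *ᵥ v, fun hQv => hv (hright v hPv hQv), ?_⟩
    rw [mulVec_mulVec, ← h, ← mulVec_mulVec, hPv, mulVec_zero]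
  · intro hP'
    obtain ⟨w, hw, hwP'⟩ := exists_vecMul_eq_zero_iff.mpr hP'
    refine exists_vecMul_eq_zero_iff.mp ⟨w ᵥ* Q', fun hwQ' => hw (hleft w hwP' hwQ'), ?_⟩
    rw [vecMul_vecMul, h, ← vecMul_vecMul, hwP', zero_vecMul]

end Scalar

theorem eq_of_map_eval_eq {m n K : Type*} [Field K] [Infinite K] {M N : Matrix m n K[X]}
    {f : K[X]} (hf : f ≠ 0) (h : ∀ z, f.eval z ≠ 0 → M.map (eval z) = N.map (eval z)) : M = N :=
  ext fun i j => eq_of_infinite_eval_eq _ _ <| (finite_setOfPred_isRoot hf).infinite_compl.mono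
    fun z hz => congrFun (congrFun (h z hz) i) j

theorem det_map_eval {n R : Type*} [Fintype n] [DecidableEq n] [CommRing R]
    (M : Matrix n n R[X]) (z : R) : (M.map (eval z)).det = M.det.eval z := by
  rw [← coe_evalRingHom, ← RingHom.mapMatrix_apply, ← RingHom.map_det]

theorem map_eval_mul {n R : Type*} [Fintype n] [CommSemiring R] (M N : Matrix n n R[X]) (z : R) :
    (M * N).map (eval z) = M.map (eval z) * N.map (eval z) := by
  simp only [← coe_evalRingHom, Matrix.map_mul]

end Matrix

namespace Polynomial

section Monic

variable {R : Type*} [Semiring R] {p p' q q' : R[X]}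

theorem natDegree_add_eq_of_mul_monic_eq_monic_mul (hp : p.Monic) (hp' : p'.Monic) (hq : q ≠ 0)
    (h : q * p = p' * q') : q.natDegree + p.natDegree = p'.natDegree + q'.natDegree := by
  have hq' : q' ≠ 0 := by
    rintro rfl
    exact hq (hp.mul_left_eq_zero_iff.mp (by rw [h, mul_zero]))
  rw [← hp'.natDegree_mul' hq', ← h, ← hp.natDegree_mul_comm, hp.natDegree_mul' hq, add_comm]

theorem leadingCoeff_eq_of_mul_monic_eq_monic_mul (hp : p.Monic) (hp' : p'.Monic)
    (h : q * p = p' * q') : q.leadingCoeff = q'.leadingCoeff := by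
  rw [← leadingCoeff_mul_monic hp, h, leadingCoeff_monic_mul hp']

end Monic

section OfFn

variable {R : Type*} [Semiring R] [DecidableEq R] {d : ℕ} {v : Fin (d + 1) → R}

theorem natDegree_ofFn_succ (hv : v (Fin.last d) ≠ 0) : (ofFn (d + 1) v).natDegree = d :=
  natDegree_eq_of_le_of_coeff_ne_zero (Nat.lt_succ_iff.mp (ofFn_natDegree_lt d.succ_pos v))
    (by rwa [ofFn_coeff_eq_val_of_lt _ d.lt_succ_self])

theorem leadingCoeff_ofFn_succ (hv : v (Fin.last d) ≠ 0) :
    (ofFn (d + 1) v).leadingCoeff = v (Fin.last d) := by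
  rw [leadingCoeff, natDegree_ofFn_succ hv, ofFn_coeff_eq_val_of_lt _ d.lt_succ_self]
  rfl

end OfFn

theorem eval_scalar_ofFn {n R : Type*} [Fintype n] [DecidableEq n] [CommSemiring R]
    [DecidableEq (Matrix n n R)] (d : ℕ) (v : Fin d → Matrix n n R) (z : R) :
    (ofFn d v).eval (Matrix.scalar n z) = ∑ i : Fin d, z ^ (i : ℕ) • v i := by
  rw [ofFn_eq_sum_monomial, eval_finsetSum]
  refine Finset.sum_congr rfl fun i _ => ?_
  rw [eval_monomial, ← map_pow, Matrix.scalar_apply, ← Matrix.smul_one_eq_diagonal, Matrix.mul_smul,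
    Matrix.mul_one]

theorem eval_scalar_ofFn_rev {n R : Type*} [Fintype n] [DecidableEq n] [CommSemiring R]
    [DecidableEq (Matrix n n R)] (d : ℕ) (v : Fin d → Matrix n n R) (z : R) :
    (ofFn d fun i => v i.rev).eval (Matrix.scalar n z) = ∑ i : Fin d, z ^ (d - 1 - i) • v i := by
  rw [eval_scalar_ofFn]
  exact Fintype.sum_equiv Fin.revPerm _ _ fun i => by
    rw [Fin.revPerm_apply, Fin.val_rev]
    congr 2
    omega

end Polynomial

namespace MCARMA

variable {k : ℕ}

-- `ofFn` lists coefficients from `X ^ 0` upwards, hence the reversal `m.rev`.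
open scoped Classical in
noncomputable def monicMatPoly (p : ℕ) (A : Fin p → Matrix (Fin k) (Fin k) ℝ) :
    Matrix (Fin k) (Fin k) ℂ[X] :=
  matPolyEquiv.symm (X ^ p + ofFn p fun m => (A m.rev).map (algebraMap ℝ ℂ))

open scoped Classical in
noncomputable def maPolyDesc (q : ℕ) (Q : Fin (q + 1) → Matrix (Fin k) (Fin k) ℝ) :
    Matrix (Fin k) (Fin k) ℂ[X] :=
  matPolyEquiv.symm (ofFn (q + 1) fun m => (Q m.rev).map (algebraMap ℝ ℂ))

open scoped Classical in
noncomputable def maPolyAsc (q : ℕ) (C : Fin (q + 1) → Matrix (Fin k) (Fin k) ℝ) :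
    Matrix (Fin k) (Fin k) ℂ[X] :=
  matPolyEquiv.symm (ofFn (q + 1) fun m => (C m).map (algebraMap ℝ ℂ))

@[simp]
theorem map_eval_monicMatPoly (p : ℕ) (A : Fin p → Matrix (Fin k) (Fin k) ℝ) (z : ℂ) :
    (monicMatPoly p A).map (eval z) = monicMatPolyEval p A z := by
  rw [monicMatPoly, matPolyEquiv_symm_map_eval, eval_add, eval_X_pow,
    eval_scalar_ofFn_rev p fun m => (A m).map (algebraMap ℝ ℂ), ← map_pow, scalar_apply,
    ← smul_one_eq_diagonal, monicMatPolyEval]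

@[simp]
theorem map_eval_maPolyDesc (q : ℕ) (Q : Fin (q + 1) → Matrix (Fin k) (Fin k) ℝ) (z : ℂ) :
    (maPolyDesc q Q).map (eval z) = maPolyEvalDesc q Q z := by
  rw [maPolyDesc, matPolyEquiv_symm_map_eval,
    eval_scalar_ofFn_rev (q + 1) fun m => (Q m).map (algebraMap ℝ ℂ), maPolyEvalDesc,
    Nat.add_sub_cancel]

@[simp]
theorem map_eval_maPolyAsc (q : ℕ) (C : Fin (q + 1) → Matrix (Fin k) (Fin k) ℝ) (z : ℂ) :
    (maPolyAsc q C).map (eval z) = maPolyEvalAsc q C z := by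
  rw [maPolyAsc, matPolyEquiv_symm_map_eval, eval_scalar_ofFn, maPolyEvalAsc]

theorem monic_monicMatPoly (p : ℕ) (A : Fin p → Matrix (Fin k) (Fin k) ℝ) :
    (matPolyEquiv (monicMatPoly p A)).Monic := by
  rw [monicMatPoly, AlgEquiv.apply_symm_apply]
  exact monic_X_pow_add (ofFn_degree_lt _)

theorem natDegree_monicMatPoly [NeZero k] (p : ℕ) (A : Fin p → Matrix (Fin k) (Fin k) ℝ) :
    (matPolyEquiv (monicMatPoly p A)).natDegree = p := by
  rw [monicMatPoly, AlgEquiv.apply_symm_apply, natDegree_add_eq_left_of_degree_lt, natDegree_X_pow]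
  simpa using ofFn_degree_lt _

theorem isMonicOfDegree_monicMatPoly [NeZero k] (p : ℕ) (A : Fin p → Matrix (Fin k) (Fin k) ℝ) :
    (monicMatPoly p A).IsMonicOfDegree p := by
  simpa only [natDegree_monicMatPoly] using isMonicOfDegree_of_monic (monic_monicMatPoly p A)

theorem map_algebraMap_ne_zero {M : Matrix (Fin k) (Fin k) ℝ} (hM : M ≠ 0) :
    M.map (algebraMap ℝ ℂ) ≠ 0 := by
  simpa [← Matrix.ext_iff] using hM

variable {q : ℕ} {Q : Fin (q + 1) → Matrix (Fin k) (Fin k) ℝ}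

theorem natDegree_maPolyDesc (hQ : Q 0 ≠ 0) : (matPolyEquiv (maPolyDesc q Q)).natDegree = q := by
  rw [maPolyDesc, AlgEquiv.apply_symm_apply, natDegree_ofFn_succ]
  simpa using map_algebraMap_ne_zero hQ

theorem leadingCoeff_maPolyDesc (hQ : Q 0 ≠ 0) :
    (matPolyEquiv (maPolyDesc q Q)).leadingCoeff = (Q 0).map (algebraMap ℝ ℂ) := by
  rw [maPolyDesc, AlgEquiv.apply_symm_apply, leadingCoeff_ofFn_succ, Fin.rev_last]
  simpa using map_algebraMap_ne_zero hQ

theorem matPolyEquiv_maPolyDesc_ne_zero (hQ : Q 0 ≠ 0) : matPolyEquiv (maPolyDesc q Q) ≠ 0 :=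
  leadingCoeff_ne_zero.mp (by simpa [leadingCoeff_maPolyDesc hQ] using map_algebraMap_ne_zero hQ)

theorem natDegree_maPolyAsc (hQ : Q (Fin.last q) ≠ 0) :
    (matPolyEquiv (maPolyAsc q Q)).natDegree = q := by
  rw [maPolyAsc, AlgEquiv.apply_symm_apply, natDegree_ofFn_succ (map_algebraMap_ne_zero hQ)]

theorem leadingCoeff_maPolyAsc (hQ : Q (Fin.last q) ≠ 0) :
    (matPolyEquiv (maPolyAsc q Q)).leadingCoeff = (Q (Fin.last q)).map (algebraMap ℝ ℂ) := by
  rw [maPolyAsc, AlgEquiv.apply_symm_apply, leadingCoeff_ofFn_succ (map_algebraMap_ne_zero hQ)]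

variable {p pstar qstar : ℕ} {Ps : Fin pstar → Matrix (Fin k) (Fin k) ℝ}
  {Qs : Fin (qstar + 1) → Matrix (Fin k) (Fin k) ℝ} {A : Fin p → Matrix (Fin k) (Fin k) ℝ}
  {C : Fin (q + 1) → Matrix (Fin k) (Fin k) ℝ}

theorem maPolyDesc_mul_monicMatPoly
    (heq : ∀ z : ℂ, (monicMatPolyEval pstar Ps z).det ≠ 0 → (monicMatPolyEval p A z).det ≠ 0 →
      (monicMatPolyEval pstar Ps z)⁻¹ * maPolyEvalDesc qstar Qs z =
        maPolyEvalAsc q C z * (monicMatPolyEval p A z)⁻¹) :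
    maPolyDesc qstar Qs * monicMatPoly p A = monicMatPoly pstar Ps * maPolyAsc q C := by
  have hdet := mul_ne_zero (isMonicOfDegree_of_monic (monic_monicMatPoly p A)).det_ne_zero
    (isMonicOfDegree_of_monic (monic_monicMatPoly pstar Ps)).det_ne_zero
  refine eq_of_map_eval_eq hdet fun z hz => ?_
  rw [eval_mul, mul_ne_zero_iff, ← det_map_eval, ← det_map_eval, map_eval_monicMatPoly,
    map_eval_monicMatPoly] at hz
  simpa only [map_eval_mul, map_eval_monicMatPoly, map_eval_maPolyDesc, map_eval_maPolyAsc] using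
    mul_eq_mul_of_nonsing_inv_mul_eq hz.2 hz.1 (heq z hz.2 hz.1)

theorem add_eq_add_and_eq_of_maPolyDesc_mul_monicMatPoly [NeZero k] (hQs : Qs 0 ≠ 0)
    (hC : C (Fin.last q) ≠ 0)
    (h : maPolyDesc qstar Qs * monicMatPoly p A = monicMatPoly pstar Ps * maPolyAsc q C) :
    qstar + p = pstar + q ∧ Qs 0 = C (Fin.last q) := by
  have h' := congrArg matPolyEquiv h
  rw [map_mul, map_mul] at h'
  constructor
  · simpa only [natDegree_maPolyDesc hQs, natDegree_monicMatPoly, natDegree_maPolyAsc hC] using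
      natDegree_add_eq_of_mul_monic_eq_monic_mul (monic_monicMatPoly p A)
        (monic_monicMatPoly pstar Ps) (matPolyEquiv_maPolyDesc_ne_zero hQs) h'
  · refine Matrix.map_injective (algebraMap ℝ ℂ).injective ?_
    simpa only [leadingCoeff_maPolyDesc hQs, leadingCoeff_maPolyAsc hC] using
      leadingCoeff_eq_of_mul_monic_eq_monic_mul (monic_monicMatPoly p A)
        (monic_monicMatPoly pstar Ps) h'

end MCARMA

open MCARMA

theorem mcarma_fraction_description_general {k pstar p qstar q : ℕ}
    (Ps : Fin pstar → Matrix (Fin k) (Fin k) ℝ)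
    (Qs : Fin (qstar + 1) → Matrix (Fin k) (Fin k) ℝ)
    (A : Fin p → Matrix (Fin k) (Fin k) ℝ)
    (C : Fin (q + 1) → Matrix (Fin k) (Fin k) ℝ)
    (hQ0 : Qs 0 ≠ 0) (hCq : C (Fin.last q) ≠ 0)
    (hleft : LeftCoprimeEval (monicMatPolyEval pstar Ps) (maPolyEvalDesc qstar Qs))
    (hright : RightCoprimeEval (monicMatPolyEval p A) (maPolyEvalAsc q C))
    (heq : ∀ z : ℂ, (monicMatPolyEval pstar Ps z).det ≠ 0 → (monicMatPolyEval p A z).det ≠ 0 →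
      (monicMatPolyEval pstar Ps z)⁻¹ * maPolyEvalDesc qstar Qs z =
        maPolyEvalAsc q C z * (monicMatPolyEval p A z)⁻¹) :
    p = pstar ∧ q = qstar ∧ Qs 0 = C (Fin.last q) ∧
      {z : ℂ | (monicMatPolyEval pstar Ps z).det = 0} =
        {z : ℂ | (monicMatPolyEval p A z).det = 0} ∧
      {z : ℂ | (maPolyEvalDesc qstar Qs z).det = 0} =
        {z : ℂ | (maPolyEvalAsc q C z).det = 0} := by
  have : NeZero k := ⟨by rintro rfl; exact hQ0 (Subsingleton.elim _ _)⟩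
  have hR : ∀ z v, monicMatPolyEval p A z *ᵥ v = 0 → maPolyEvalAsc q C z *ᵥ v = 0 → v = 0 :=
    fun z v => eq_zero_of_rank_fromRows_eq_card (by simpa using hright z)
  have hL : ∀ z w, w ᵥ* monicMatPolyEval pstar Ps z = 0 → w ᵥ* maPolyEvalDesc qstar Qs z = 0 →
      w = 0 :=
    fun z w => eq_zero_of_rank_fromCols_eq_card (by simpa using hleft z)
  have hrel := maPolyDesc_mul_monicMatPoly heq
  have hrelz z : maPolyEvalDesc qstar Qs z * monicMatPolyEval p A z =
      monicMatPolyEval pstar Ps z * maPolyEvalAsc q C z := by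
    simpa [map_eval_mul] using congrArg (·.map (eval z)) hrel
  have hpp : p = pstar := (isMonicOfDegree_monicMatPoly p A).eq_of_mul_eq_mul
    (isMonicOfDegree_monicMatPoly pstar Ps) (by simpa using hR) (by simpa using hL) hrel
  obtain ⟨hdeg, hlead⟩ := add_eq_add_and_eq_of_maPolyDesc_mul_monicMatPoly hQ0 hCq hrel
  exact ⟨hpp, by omega, hlead,
    Set.ext fun z => (det_eq_zero_iff_of_mul_eq_mul (hrelz z) (hR z) (hL z)).symm,
    Set.ext fun z => (det_eq_zero_iff_of_mul_eq_mul (hrelz z).symm (fun v h₁ h₂ => hR z v h₂ h₁)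
      (fun w h₁ h₂ => hL z w h₂ h₁)).symm⟩

/-- Connection between the MCARMA polynomials `(P*, Q*)` and the coprime right polynomial
fraction description `(P, Q)` of the transfer function: if `(P*, Q*)` is left coprime,
`(P, Q)` is right coprime and `P*(z)⁻¹ Q*(z) = Q(z) P(z)⁻¹` whenever both determinants are
nonzero, then `p = p*`, `q = q*`, `Q₀ = C_q`, `𝒩(P*) = 𝒩(P)` and `𝒩(Q*) = 𝒩(Q)`. -/
theorem mcarma_fraction_description {k pstar p qstar q : ℕ}
    (hpstar : 1 ≤ pstar) (hp : 1 ≤ p) (hqstar : qstar < pstar) (hq : q < p)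
    (Ps : Fin pstar → Matrix (Fin k) (Fin k) ℝ)
    (Qs : Fin (qstar + 1) → Matrix (Fin k) (Fin k) ℝ)
    (A : Fin p → Matrix (Fin k) (Fin k) ℝ)
    (C : Fin (q + 1) → Matrix (Fin k) (Fin k) ℝ)
    (hQ0 : Qs 0 ≠ 0) (hCq : C (Fin.last q) ≠ 0)
    (hleft : LeftCoprimeEval (monicMatPolyEval pstar Ps) (maPolyEvalDesc qstar Qs))
    (hright : RightCoprimeEval (monicMatPolyEval p A) (maPolyEvalAsc q C))
    (heq : ∀ z : ℂ, (monicMatPolyEval pstar Ps z).det ≠ 0 → (monicMatPolyEval p A z).det ≠ 0 →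
      (monicMatPolyEval pstar Ps z)⁻¹ * maPolyEvalDesc qstar Qs z =
        maPolyEvalAsc q C z * (monicMatPolyEval p A z)⁻¹) :
    p = pstar ∧ q = qstar ∧ Qs 0 = C (Fin.last q) ∧
      {z : ℂ | (monicMatPolyEval pstar Ps z).det = 0} =
        {z : ℂ | (monicMatPolyEval p A z).det = 0} ∧
      {z : ℂ | (maPolyEvalDesc qstar Qs z).det = 0} =
        {z : ℂ | (maPolyEvalAsc q C z).det = 0} :=
  mcarma_fraction_description_general Ps Qs A C hQ0 hCq hleft hright heq
end

section
/- Let d, k ≥ 1, Λ ∈ M_d(ℝ), Θ ∈ M_{d×k}(ℝ), let j ≥ 1, let y : ℝ → ℝ^k be (j−1)-times differentiable, and let x : ℝ → ℝ^d be differentiable with x′(t) = Λ·x(t) + Θ·y(t) for all t ∈ ℝ. Then x is j-times differentiable and its j-th derivative satisfies x⁽ʲ⁾(t) = Λʲ·x(t) + Σ_{m=0}^{j−1} Λ^{j−1−m}·Θ·y⁽ᵐ⁾(t) for all t ∈ ℝ. -/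
open Matrix Finset

/-! Differentiating `x' = Λ x + Θ y` once more replaces `x` by `Λ x + Θ y` and each `y⁽ᵐ⁾` by
`y⁽ᵐ⁺¹⁾`; after reindexing the sum, the new term `Λⁿ⁺¹ Θ y` becomes its `m = 0` summand. -/

theorem HasDerivAt.matrix_mulVec {𝕜 ι κ : Type*} [NontriviallyNormedField 𝕜] [Fintype ι]
    [Fintype κ] (A : Matrix ι κ 𝕜) {f : 𝕜 → κ → 𝕜} {f' : κ → 𝕜} {t : 𝕜}
    (hf : HasDerivAt f f' t) : HasDerivAt (fun s => A *ᵥ f s) (A *ᵥ f') t :=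
  hasDerivAt_pi.2 fun i => by
    simpa only [mulVec, dotProduct] using
      HasDerivAt.fun_sum fun j _ => (hasDerivAt_pi.1 hf j).const_mul (A i j)

section

variable {𝕜 ι κ : Type*} [NontriviallyNormedField 𝕜] [Fintype ι] [DecidableEq ι] [Fintype κ]
  {Λ : Matrix ι ι 𝕜} {Θ : Matrix ι κ 𝕜} {x : 𝕜 → ι → 𝕜} {y : 𝕜 → κ → 𝕜}

theorem hasDerivAt_iteratedDeriv_of_hasDerivAt_mulVec_add
    (hx : ∀ t, HasDerivAt x (Λ *ᵥ x t + Θ *ᵥ y t) t) (n : ℕ)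
    (hy : ∀ m < n, Differentiable 𝕜 (iteratedDeriv m y)) (t : 𝕜) :
    HasDerivAt (iteratedDeriv n x)
      (Λ ^ (n + 1) *ᵥ x t + ∑ m ∈ range (n + 1), Λ ^ (n - m) *ᵥ Θ *ᵥ iteratedDeriv m y t) t := by
  induction n generalizing t with
  | zero => simpa using hx t
  | succ n ih =>
    have ih := fun s => ih (fun m hm => hy m (by omega)) s
    have hformula : iteratedDeriv (n + 1) x = fun s =>
        Λ ^ (n + 1) *ᵥ x s + ∑ m ∈ range (n + 1), Λ ^ (n - m) *ᵥ Θ *ᵥ iteratedDeriv m y s := by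
      ext1 s
      rw [iteratedDeriv_succ, (ih s).deriv]
    have hderiv := ((hx t).matrix_mulVec (Λ ^ (n + 1))).fun_add <| HasDerivAt.fun_sum fun m hm =>
      (((hy m (mem_range.mp hm)).differentiableAt.hasDerivAt).matrix_mulVec Θ).matrix_mulVec
        (Λ ^ (n - m))
    rw [hformula]
    refine hderiv.congr_deriv ?_
    rw [sum_range_succ' _ (n + 1), mulVec_add, mulVec_mulVec, ← pow_succ]
    simp only [iteratedDeriv_succ, iteratedDeriv_zero, Nat.add_sub_add_right, Nat.sub_zero]
    abel

end

theorem higher_derivatives_of_linear_ode_general {d k : ℕ}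
    (Λ : Matrix (Fin d) (Fin d) ℝ) (Θ : Matrix (Fin d) (Fin k) ℝ)
    (j : ℕ)
    (y : ℝ → (Fin k → ℝ))
    (hy : ∀ m < j - 1, Differentiable ℝ (iteratedDeriv m y))
    (x : ℝ → (Fin d → ℝ))
    (hx : ∀ t : ℝ, HasDerivAt x (Λ.mulVec (x t) + Θ.mulVec (y t)) t) :
    (∀ m < j, Differentiable ℝ (iteratedDeriv m x)) ∧
      ∀ t : ℝ,
        iteratedDeriv j x t =
          (Λ ^ j).mulVec (x t) +
            ∑ m ∈ Finset.range j, (Λ ^ (j - 1 - m)).mulVec (Θ.mulVec (iteratedDeriv m y t)) := by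
  rcases j with _ | n
  · simp
  have hderiv (m : ℕ) (hm : m ≤ n) (t : ℝ) :=
    hasDerivAt_iteratedDeriv_of_hasDerivAt_mulVec_add hx m (fun i hi => hy i (by omega)) t
  refine ⟨fun m hm t => (hderiv m (by omega) t).differentiableAt, fun t => ?_⟩
  rw [iteratedDeriv_succ, (hderiv n le_rfl t).deriv]
  simp

/-- If `x′(t) = Λ x(t) + Θ y(t)` and `y` is `(j−1)`-times differentiable, then `x` is
`j`-times differentiable and
`x⁽ʲ⁾(t) = Λʲ x(t) + ∑_{m=0}^{j−1} Λ^{j−1−m} Θ y⁽ᵐ⁾(t)`. -/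
theorem higher_derivatives_of_linear_ode {d k : ℕ} (hd : 1 ≤ d) (hk : 1 ≤ k)
    (Λ : Matrix (Fin d) (Fin d) ℝ) (Θ : Matrix (Fin d) (Fin k) ℝ)
    (j : ℕ) (hj : 1 ≤ j)
    (y : ℝ → (Fin k → ℝ))
    (hy : ∀ m < j - 1, Differentiable ℝ (iteratedDeriv m y))
    (x : ℝ → (Fin d → ℝ))
    (hx : ∀ t : ℝ, HasDerivAt x (Λ.mulVec (x t) + Θ.mulVec (y t)) t) :
    (∀ m < j, Differentiable ℝ (iteratedDeriv m x)) ∧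
      ∀ t : ℝ,
        iteratedDeriv j x t =
          (Λ ^ j).mulVec (x t) +
            ∑ m ∈ Finset.range j, (Λ ^ (j - 1 - m)).mulVec (Θ.mulVec (iteratedDeriv m y t)) :=
  higher_derivatives_of_linear_ode_general Λ Θ j y hy x hx
end

section
/- Let A ∈ M_n(ℝ), Λ ∈ M_m(ℝ), N ∈ M_{n×m}(ℝ), v ∈ ℝⁿ, and w ∈ ℝᵐ. Then vᵀ·exp(hA)·N·exp(tΛ)·w = 0 for all h ∈ [0,1] and all t ≥ 0 if and only if vᵀ·Aᵅ·N·Λᵝ·w = 0 for all integers 0 ≤ α ≤ n−1 and 0 ≤ β ≤ m−1. -/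
/-!
For a square matrix `B` and a linear functional `L`, the conditions `L (exp (s • B)) = 0` for
`s ∈ [0, 1]` and `L (B ^ k) = 0` for all `k` are equivalent: differentiating `s ↦ L (Bᵏ exp (s • B))`
on `[0, 1]`, where derivatives are unique, gives `L (Bᵏ⁺¹ exp (s • B)) = 0` there, so `L (Bᵏ) = 0`
at `s = 0`; conversely `L (exp (s • B)) = ∑ sᵏ / k! • L (Bᵏ)`. By Cayley–Hamilton every power of
`B` is a combination of the powers below the size of `B`, so only those powers matter. Applied to
`A` and `Λ` in turn, with `L` the form `(X, Y) ↦ vᵀ X N Y w` in one of its arguments, this gives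
the theorem.
-/

open Matrix NormedSpace Polynomial Set

theorem ContinuousLinearMap.map_exp_smul_eq_zero {𝕂 𝔸 E : Type*} [RCLike 𝕂] [NormedRing 𝔸]
    [NormedAlgebra 𝕂 𝔸] [CompleteSpace 𝔸] [NormedAddCommGroup E] [NormedSpace 𝕂 E]
    (L : 𝔸 →L[𝕂] E) {b : 𝔸} (h : ∀ k, L (b ^ k) = 0) (s : 𝕂) : L (exp (s • b)) = 0 := by
  rw [exp_eq_tsum 𝕂, L.map_tsum (expSeries_summable' _)]
  simp [_root_.smul_pow, h]

theorem eqOn_zero_of_hasDerivWithinAt_succ {𝕜 E : Type*} [NontriviallyNormedField 𝕜]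
    [NormedAddCommGroup E] [NormedSpace 𝕜 E] {f : ℕ → 𝕜 → E} {s : Set 𝕜}
    (hs : UniqueDiffOn 𝕜 s) (hf : ∀ k, ∀ x ∈ s, HasDerivWithinAt (f k) (f (k + 1) x) s x)
    (h₀ : EqOn (f 0) 0 s) (k : ℕ) : EqOn (f k) 0 s := by
  induction k with
  | zero => exact h₀
  | succ k ih =>
    intro x hx
    exact (hs x hx).eq_deriv s (hf k x hx) ((hasDerivWithinAt_const x s 0).congr ih (ih hx))

theorem ContinuousLinearMap.map_pow_eq_zero_of_map_exp_smul {𝔸 E : Type*} [NormedRing 𝔸]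
    [NormedAlgebra ℝ 𝔸] [CompleteSpace 𝔸] [NormedAddCommGroup E] [NormedSpace ℝ E]
    (L : 𝔸 →L[ℝ] E) {b : 𝔸} (h : ∀ s ∈ Icc (0 : ℝ) 1, L (exp (s • b)) = 0) (k : ℕ) :
    L (b ^ k) = 0 := by
  have hderiv (k : ℕ) (s : ℝ) :
      HasDerivAt (fun s : ℝ => L (b ^ k * exp (s • b))) (L (b ^ (k + 1) * exp (s • b))) s := by
    have := L.hasFDerivAt.comp_hasDerivAt s ((hasDerivAt_exp_smul_const' b s).const_mul (b ^ k))
    rwa [← mul_assoc, ← pow_succ] at this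
  simpa using eqOn_zero_of_hasDerivWithinAt_succ uniqueDiffOn_Icc_zero_one
    (fun k s _ => (hderiv k s).hasDerivWithinAt) (by simpa [EqOn] using h) k
    (left_mem_Icc.2 zero_le_one)

namespace Matrix

variable {ι : Type*} [Fintype ι] [DecidableEq ι]

theorem map_pow_eq_zero_of_forall_lt_card {K M : Type*} [CommRing K] [Nontrivial K]
    [AddCommGroup M] [Module K M] (L : Matrix ι ι K →ₗ[K] M) {B : Matrix ι ι K}
    (h : ∀ k < Fintype.card ι, L (B ^ k) = 0) (k : ℕ) : L (B ^ k) = 0 := by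
  rcases isEmpty_or_nonempty ι with hι | hι
  · simp [Subsingleton.elim (B ^ k) 0]
  have hB : B.charpoly ≠ 1 := fun h1 =>
    Fintype.card_ne_zero (α := ι) (by simpa [h1] using B.charpoly_natDegree_eq_dim.symm)
  have hdeg : (X ^ k %ₘ B.charpoly).natDegree < Fintype.card ι :=
    B.charpoly_natDegree_eq_dim ▸ natDegree_modByMonic_lt _ B.charpoly_monic hB
  rw [pow_eq_aeval_mod_charpoly, aeval_eq_sum_range' hdeg, map_sum]
  exact Finset.sum_eq_zero fun i hi => by rw [map_smul, h i (Finset.mem_range.1 hi), smul_zero]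

variable {E : Type*} [NormedAddCommGroup E] [NormedSpace ℝ E] (L : Matrix ι ι ℝ →ₗ[ℝ] E)
  {B : Matrix ι ι ℝ}

theorem map_exp_smul_eq_zero_of_forall_lt_card (h : ∀ k < Fintype.card ι, L (B ^ k) = 0)
    (s : ℝ) : L (exp (s • B)) = 0 := by
  -- `exp` only sees the product topology, which the `linftyOp` norm induces.
  let _ : NormedRing (Matrix ι ι ℝ) := Matrix.linftyOpNormedRing
  let _ : NormedAlgebra ℝ (Matrix ι ι ℝ) := Matrix.linftyOpNormedAlgebra
  exact L.toContinuousLinearMap.map_exp_smul_eq_zero (map_pow_eq_zero_of_forall_lt_card L h) s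

theorem map_pow_eq_zero_of_map_exp_smul (h : ∀ s ∈ Icc (0 : ℝ) 1, L (exp (s • B)) = 0)
    (k : ℕ) : L (B ^ k) = 0 := by
  let _ : NormedRing (Matrix ι ι ℝ) := Matrix.linftyOpNormedRing
  let _ : NormedAlgebra ℝ (Matrix ι ι ℝ) := Matrix.linftyOpNormedAlgebra
  exact L.toContinuousLinearMap.map_pow_eq_zero_of_map_exp_smul h k

def sandwichForm {κ R : Type*} [Fintype κ] [CommRing R] (v : ι → R) (N : Matrix ι κ R)
    (w : κ → R) : Matrix ι ι R →ₗ[R] Matrix κ κ R →ₗ[R] R :=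
  LinearMap.mk₂ R (fun X Y => v ⬝ᵥ (X * N * Y) *ᵥ w)
    (fun _ _ _ => by simp [Matrix.add_mul, add_mulVec, dotProduct_add])
    (fun _ _ _ => by simp [smul_mulVec, dotProduct_smul])
    (fun _ _ _ => by simp [Matrix.mul_add, add_mulVec, dotProduct_add])
    (fun _ _ _ => by simp [smul_mulVec, dotProduct_smul])

end Matrix

/-- `vᵀ e^{hA} N e^{tΛ} w = 0` for all `h ∈ [0,1]` and `t ≥ 0` if and only if
`vᵀ Aᵅ N Λᵝ w = 0` for all `0 ≤ α ≤ n−1` and `0 ≤ β ≤ m−1`. -/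
theorem exp_sandwich_zero_iff_powers {n m : ℕ}
    (A : Matrix (Fin n) (Fin n) ℝ) (Λ : Matrix (Fin m) (Fin m) ℝ)
    (N : Matrix (Fin n) (Fin m) ℝ) (v : Fin n → ℝ) (w : Fin m → ℝ) :
    (∀ h ∈ Set.Icc (0 : ℝ) 1, ∀ t : ℝ, 0 ≤ t →
        v ⬝ᵥ ((NormedSpace.exp (h • A) * N * NormedSpace.exp (t • Λ)).mulVec w) = 0) ↔
      (∀ α < n, ∀ β < m, v ⬝ᵥ ((A ^ α * N * Λ ^ β).mulVec w) = 0) := by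
  set F := sandwichForm v N w
  have hF (X Y) : v ⬝ᵥ (X * N * Y) *ᵥ w = F X Y := rfl
  simp only [hF]
  constructor
  · intro H α _ β _
    refine map_pow_eq_zero_of_map_exp_smul (F (A ^ α)) (fun t ht => ?_) β
    exact map_pow_eq_zero_of_map_exp_smul (F.flip (exp (t • Λ))) (fun h hh => H h hh t ht.1) α
  · intro H h _ t _
    refine map_exp_smul_eq_zero_of_forall_lt_card (F.flip (exp (t • Λ))) (fun α hα => ?_) h
    refine map_exp_smul_eq_zero_of_forall_lt_card (F (A ^ α)) (fun β hβ => ?_) t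
    exact H α (Fintype.card_fin n ▸ hα) β (Fintype.card_fin m ▸ hβ)
end

section
/- Let A ∈ M_n(ℝ) and v, w ∈ ℝⁿ. Then vᵀ·exp(hA)·w = 0 for all h ∈ [0,1] if and only if vᵀ·Aᵅ·w = 0 for all integers 0 ≤ α ≤ n−1. -/
/-!
Write `L M = vᵀ M w`, a continuous linear functional on matrices.

If `L (e^{tA})` vanishes on `[0, 1]`, then so does each `g_k t = L (Aᵏ e^{tA})`: `g_{k+1}` is the
derivative of `g_k`, so it vanishes on `(0, 1)`, hence on `[0, 1]` by continuity; `g_k 0 = vᵀ Aᵏ w`.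

Conversely, by Cayley–Hamilton every power `Aᵏ` is a linear combination of `A⁰, …, Aⁿ⁻¹`, so the
closed subspace `ker L` contains every term of the exponential series of `tA`, hence its sum.
-/

open Matrix NormedSpace

open Polynomial in
theorem Polynomial.pow_mem_span_pow_lt_natDegree {R A : Type*} [CommRing R] [Ring A]
    [Algebra R A] {p : R[X]} (hp : p.Monic) {x : A} (hx : aeval x p = 0) (k : ℕ) :
    x ^ k ∈ Submodule.span R ((x ^ ·) '' Set.Iio p.natDegree) := by
  nontriviality A
  have hp1 : p ≠ 1 := by
    rintro rfl
    simp at hx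
  rw [← aeval_X_pow (R := R), ← aeval_modByMonic_eq_self_of_root hx,
    aeval_eq_sum_range' (natDegree_modByMonic_lt _ hp hp1)]
  exact Submodule.sum_mem _ fun i hi =>
    Submodule.smul_mem _ _ (Submodule.subset_span ⟨i, Finset.mem_range.mp hi, rfl⟩)

theorem Matrix.pow_mem_span_pow_lt_card {n R : Type*} [Fintype n] [DecidableEq n] [CommRing R]
    [Nontrivial R] (A : Matrix n n R) (k : ℕ) :
    A ^ k ∈ Submodule.span R ((A ^ ·) '' Set.Iio (Fintype.card n)) := by
  simpa using Polynomial.pow_mem_span_pow_lt_natDegree A.charpoly_monic A.aeval_self_charpoly k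

theorem NormedSpace.exp_mem_of_forall_pow_mem {𝕂 𝔸 : Type*} [Field 𝕂] [CharZero 𝕂] [Ring 𝔸]
    [Algebra 𝕂 𝔸] [TopologicalSpace 𝔸] [IsTopologicalRing 𝔸] {s : Submodule 𝕂 𝔸}
    (hs : IsClosed (s : Set 𝔸)) {x : 𝔸} (hx : ∀ k, x ^ k ∈ s) : exp x ∈ s := by
  rw [exp_eq_tsum 𝕂]
  exact tsum_mem hs fun k => s.smul_mem _ (hx k)

theorem Set.EqOn.eqOn_zero_of_hasDerivAt {E : Type*} [NormedAddCommGroup E] [NormedSpace ℝ E]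
    {f f' : ℝ → E} {a b : ℝ} (hab : a < b) (hf : ∀ t ∈ Set.Ioo a b, HasDerivAt f (f' t) t)
    (hf' : ContinuousOn f' (Set.Icc a b)) (h : Set.EqOn f 0 (Set.Icc a b)) :
    Set.EqOn f' 0 (Set.Icc a b) := by
  have hIoo : Set.EqOn f' 0 (Set.Ioo a b) := fun t ht =>
    have hloc : f =ᶠ[nhds t] fun _ => 0 := Filter.eventuallyEq_of_mem (isOpen_Ioo.mem_nhds ht)
      fun s hs => h (Set.Ioo_subset_Icc_self hs)
    (hf t ht).unique ((hasDerivAt_const t 0).congr_of_eventuallyEq hloc)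
  exact hIoo.of_subset_closure hf' continuousOn_const Set.Ioo_subset_Icc_self
    (closure_Ioo hab.ne).ge

theorem hasDerivAt_pow_mul_exp_smul {𝔸 : Type*} [NormedRing 𝔸] [NormedAlgebra ℝ 𝔸]
    [CompleteSpace 𝔸] (a : 𝔸) (k : ℕ) (t : ℝ) :
    HasDerivAt (fun s : ℝ => a ^ k * exp (s • a)) (a ^ (k + 1) * exp (t • a)) t := by
  simpa only [← mul_assoc, ← pow_succ] using (hasDerivAt_exp_smul_const' a t).const_mul (a ^ k)

theorem ContinuousLinearMap.map_pow_eq_zero_of_map_exp_smul_eq_zero {𝔸 E : Type*} [NormedRing 𝔸]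
    [NormedAlgebra ℝ 𝔸] [CompleteSpace 𝔸] [NormedAddCommGroup E] [NormedSpace ℝ E]
    (L : 𝔸 →L[ℝ] E) (a : 𝔸) {b : ℝ} (hb : 0 < b)
    (h : ∀ t ∈ Set.Icc 0 b, L (exp (t • a)) = 0) (k : ℕ) : L (a ^ k) = 0 := by
  have hderiv (k : ℕ) (t : ℝ) : HasDerivAt (fun s => L (a ^ k * exp (s • a)))
      (L (a ^ (k + 1) * exp (t • a))) t :=
    L.hasFDerivAt.comp_hasDerivAt t (hasDerivAt_pow_mul_exp_smul a k t)
  have hzero (k : ℕ) : Set.EqOn (fun t => L (a ^ k * exp (t • a))) 0 (Set.Icc 0 b) := by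
    induction k with
    | zero => intro t ht; simpa using h t ht
    | succ k ih =>
      exact ih.eqOn_zero_of_hasDerivAt hb (fun t _ => hderiv k t)
        fun t _ => (hderiv (k + 1) t).continuousAt.continuousWithinAt
  simpa using hzero k (Set.left_mem_Icc.mpr hb.le)

noncomputable def Matrix.dotProductMulVecCLM {n 𝕜 : Type*} [Fintype n] [NontriviallyNormedField 𝕜]
    [CompleteSpace 𝕜] (v w : n → 𝕜) : Matrix n n 𝕜 →L[𝕜] 𝕜 :=
  LinearMap.toContinuousLinearMap
    { toFun M := v ⬝ᵥ M *ᵥ w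
      map_add' M N := by rw [add_mulVec, dotProduct_add]
      map_smul' c M := by rw [smul_mulVec, dotProduct_smul]; rfl }

/-- `vᵀ e^{hA} w = 0` for all `h ∈ [0,1]` if and only if `vᵀ Aᵅ w = 0` for all
`0 ≤ α ≤ n−1`. -/
theorem exp_zero_iff_powers {n : ℕ}
    (A : Matrix (Fin n) (Fin n) ℝ) (v w : Fin n → ℝ) :
    (∀ h ∈ Set.Icc (0 : ℝ) 1, v ⬝ᵥ ((exp (h • A)).mulVec w) = 0) ↔
      (∀ α < n, v ⬝ᵥ ((A ^ α).mulVec w) = 0) := by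
  let L := dotProductMulVecCLM v w
  constructor
  · intro hexp α _
    -- `exp` does not depend on the norm, so any algebra norm inducing the product topology will do.
    let := Matrix.linftyOpNormedRing (n := Fin n) (α := ℝ)
    let := Matrix.linftyOpNormedAlgebra (n := Fin n) (α := ℝ) (R := ℝ)
    exact L.map_pow_eq_zero_of_map_exp_smul_eq_zero A one_pos hexp α
  · intro hpow t _
    have hspan : Submodule.span ℝ ((A ^ ·) '' Set.Iio n) ≤ L.ker :=
      Submodule.span_le.mpr <| by rintro _ ⟨α, hα, rfl⟩; exact hpow α hα
    have hpow_mem (k : ℕ) : (t • A) ^ k ∈ L.ker := by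
      rw [smul_pow]
      exact Submodule.smul_mem _ _ (hspan (by simpa using A.pow_mem_span_pow_lt_card k))
    exact exp_mem_of_forall_pow_mem (𝕂 := ℝ) L.isClosed_ker hpow_mem
end

section
/- Let A ∈ M_d(ℝ), B ∈ M_{d×k}(ℝ), let Σ ∈ M_k(ℝ) be symmetric positive semidefinite, and let u, v ∈ ℝᵈ. Then ∫_0^{min(h,ĥ)} uᵀ·exp((h−s)A)·B·Σ·Bᵀ·exp((ĥ−s)Aᵀ)·v ds = 0 for all h, ĥ ∈ [0,1] if and only if uᵀ·Aᵅ·B·Σ·Bᵀ·(Aᵀ)ᵝ·v = 0 for all integers 0 ≤ α, β ≤ d−1. -/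
/-!
Write `F(s, t) = uᵀ e^{sA} M e^{tAᵀ} v` with `M = B Σ Bᵀ`. The substitution `r = min(h, ĥ) - s`
turns the covariance integral into `∫₀^{min(h, ĥ)} F(r, r + |h - ĥ|) dr` (or its mirror image),
so by the fundamental theorem of calculus the integrals all vanish iff `F = 0` on `(0, 1)²`.
As `F` is real analytic in each variable, this happens iff all mixed derivatives at the origin,
`uᵀ A^α M (Aᵀ)^β v`, vanish. By Cayley–Hamilton every power of `A`, hence also `e^{sA}`, lies in
the span of `1, A, …, A^{d-1}`, so the exponents `α, β < d` suffice.
-/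

open Matrix NormedSpace Set Filter Topology Polynomial

theorem eqOn_zero_of_forall_intervalIntegral_eq_zero {E : Type*} [NormedAddCommGroup E]
    [NormedSpace ℝ E] [CompleteSpace E] {g : ℝ → E} (hg : Continuous g) {a c : ℝ}
    (h : ∀ b ∈ Ioo a c, ∫ s in a..b, g s = 0) : EqOn g 0 (Ioo a c) := by
  intro x hx
  have hzero : (fun b => ∫ s in a..b, g s) =ᶠ[𝓝 x] fun _ => 0 :=
    eventually_of_mem (Ioo_mem_nhds hx.1 hx.2) h
  exact ((hg.integral_hasStrictDerivAt a x).hasDerivAt.congr_of_eventuallyEq hzero.symm).unique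
    (hasDerivAt_const x 0)

theorem apply_eq_zero_of_integral_min_eq_zero_of_le {F : ℝ → ℝ → ℝ}
    (hF : Continuous (Function.uncurry F)) {c : ℝ}
    (h : ∀ r ∈ Icc 0 c, ∀ r' ∈ Icc 0 c, ∫ s in (0 : ℝ)..min r r', F (r - s) (r' - s) = 0)
    {s t : ℝ} (hs : s ∈ Ioo 0 c) (ht : t ∈ Ioo 0 c) (hst : s ≤ t) : F s t = 0 := by
  set δ := t - s
  have hg : Continuous fun r => F r (r + δ) :=
    hF.comp (continuous_id.prodMk (continuous_id.add continuous_const))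
  suffices EqOn (fun r => F r (r + δ)) 0 (Ioo 0 (c - δ)) by
    simpa [δ] using this ⟨hs.1, by linarith [ht.2]⟩
  refine eqOn_zero_of_forall_intervalIntegral_eq_zero hg fun b hb => ?_
  have hint := h b ⟨hb.1.le, by linarith [hb.2]⟩ (b + δ) ⟨by linarith [hb.1], by linarith [hb.2]⟩
  rw [min_eq_left (by linarith)] at hint
  calc ∫ r in (0 : ℝ)..b, F r (r + δ) = ∫ r in (0 : ℝ)..b, F (b - r) (b - r + δ) := by
        rw [intervalIntegral.integral_comp_sub_left (fun r => F r (r + δ))]; simp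
    _ = 0 := by simpa only [sub_add_eq_add_sub, add_comm δ] using hint

theorem apply_eq_zero_of_integral_min_eq_zero {F : ℝ → ℝ → ℝ}
    (hF : Continuous (Function.uncurry F)) {c : ℝ}
    (h : ∀ r ∈ Icc 0 c, ∀ r' ∈ Icc 0 c, ∫ s in (0 : ℝ)..min r r', F (r - s) (r' - s) = 0)
    {s t : ℝ} (hs : s ∈ Ioo 0 c) (ht : t ∈ Ioo 0 c) : F s t = 0 := by
  rcases le_total s t with hst | hts
  · exact apply_eq_zero_of_integral_min_eq_zero_of_le hF h hs ht hst
  · refine apply_eq_zero_of_integral_min_eq_zero_of_le (F := fun s t => F t s)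
      (hF.comp continuous_swap) (fun r hr r' hr' => ?_) ht hs hts
    simpa only [min_comm] using h r' hr' r hr

namespace Matrix

variable {n m : Type*} [Fintype n] [Fintype m]

theorem pow_mem_span_pow_lt_card_s15 {R : Type*} [CommRing R] [Nontrivial R] [DecidableEq n]
    (A : Matrix n n R) (k : ℕ) :
    A ^ k ∈ Submodule.span R ((A ^ ·) '' Iio (Fintype.card n)) := by
  rcases isEmpty_or_nonempty n with hn | hn
  · exact Subsingleton.elim (0 : Matrix n n R) (A ^ k) ▸ Submodule.zero_mem _
  have hne : A.charpoly ≠ 1 := fun h =>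
    (Fintype.card_pos (α := n)).ne' (by simpa using congrArg natDegree h)
  have hdeg : (X ^ k %ₘ A.charpoly).natDegree < Fintype.card n := by
    simpa using natDegree_modByMonic_lt (X ^ k) A.charpoly_monic hne
  rw [pow_eq_aeval_mod_charpoly, aeval_eq_sum_range' hdeg]
  exact Submodule.sum_mem _ fun i hi =>
    Submodule.smul_mem _ _ (Submodule.subset_span ⟨i, Finset.mem_range.1 hi, rfl⟩)

theorem exp_smul_mem_adjoin [DecidableEq n] (A : Matrix n n ℝ) (s : ℝ) :
    exp (s • A) ∈ Algebra.adjoin ℝ {A} := by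
  have hclosed : IsClosed (Algebra.adjoin ℝ {A} : Set (Matrix n n ℝ)) :=
    (Subalgebra.toSubmodule (Algebra.adjoin ℝ {A})).closed_of_finiteDimensional
  exact exp_mem (R := ℝ) hclosed (Subalgebra.smul_mem _ (Algebra.self_mem_adjoin_singleton ℝ A) s)

theorem exp_smul_mem_span_pow_lt_card [DecidableEq n] (A : Matrix n n ℝ) (s : ℝ) :
    exp (s • A) ∈ Submodule.span ℝ ((A ^ ·) '' Iio (Fintype.card n)) := by
  have hle : Subalgebra.toSubmodule (Algebra.adjoin ℝ {A}) ≤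
      Submodule.span ℝ ((A ^ ·) '' Iio (Fintype.card n)) := by
    rw [Algebra.adjoin_eq_span, Submodule.span_le]
    intro X hX
    obtain ⟨k, rfl⟩ := Submonoid.mem_closure_singleton.1 hX
    exact pow_mem_span_pow_lt_card_s15 A k
  exact hle (exp_smul_mem_adjoin A s)

def dotProductMulVecLinearMap {R : Type*} [CommSemiring R] (x : n → R) (y : m → R) :
    Matrix n m R →ₗ[R] R where
  toFun X := x ⬝ᵥ X *ᵥ y
  map_add' X Y := by simp only [add_mulVec, dotProduct_add]
  map_smul' c X := by simp only [smul_mulVec, dotProduct_smul, RingHom.id_apply]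

theorem dotProduct_mulVec_eq_zero_of_mem_span {R : Type*} [CommSemiring R] {x : n → R}
    {y : m → R} {S : Set (Matrix n m R)} (h : ∀ X ∈ S, x ⬝ᵥ X *ᵥ y = 0) {X : Matrix n m R}
    (hX : X ∈ Submodule.span R S) : x ⬝ᵥ X *ᵥ y = 0 :=
  (Submodule.span_le (p := LinearMap.ker (dotProductMulVecLinearMap x y))).2 h hX

theorem continuous_exp_smul [DecidableEq n] (A : Matrix n n ℝ) :
    Continuous fun s : ℝ => exp (s • A) := by
  let : NormedRing (Matrix n n ℝ) := Matrix.linftyOpNormedRing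
  let : NormedAlgebra ℝ (Matrix n n ℝ) := Matrix.linftyOpNormedAlgebra
  refine continuous_iff_continuousAt.2 fun s => ?_
  have hsmul : AnalyticAt ℝ (fun r : ℝ => r • A) s := analyticAt_id.smul analyticAt_const
  exact ((exp_analytic _).comp hsmul).continuousAt

theorem hasDerivAt_dotProduct_mul_exp_smul_mulVec [DecidableEq n] (x y : n → ℝ)
    (C A : Matrix n n ℝ) (s : ℝ) :
    HasDerivAt (fun r : ℝ => x ⬝ᵥ (C * exp (r • A)) *ᵥ y)
      (x ⬝ᵥ (C * A * exp (s • A)) *ᵥ y) s := by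
  let : NormedRing (Matrix n n ℝ) := Matrix.linftyOpNormedRing
  let : NormedAlgebra ℝ (Matrix n n ℝ) := Matrix.linftyOpNormedAlgebra
  rw [Matrix.mul_assoc]
  exact (dotProductMulVecLinearMap x y).toContinuousLinearMap.hasFDerivAt.comp_hasDerivAt s
    ((hasDerivAt_exp_smul_const' A s).const_mul C)

theorem analyticAt_dotProduct_exp_smul_mulVec [DecidableEq n] (x y : n → ℝ)
    (A : Matrix n n ℝ) (s : ℝ) : AnalyticAt ℝ (fun r : ℝ => x ⬝ᵥ exp (r • A) *ᵥ y) s := by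
  let : NormedRing (Matrix n n ℝ) := Matrix.linftyOpNormedRing
  let : NormedAlgebra ℝ (Matrix n n ℝ) := Matrix.linftyOpNormedAlgebra
  have hsmul : AnalyticAt ℝ (fun r : ℝ => r • A) s := analyticAt_id.smul analyticAt_const
  exact ((dotProductMulVecLinearMap x y).toContinuousLinearMap.analyticAt _).comp
    ((exp_analytic _).comp hsmul)

theorem dotProduct_pow_mulVec_eq_zero_of_eventually [DecidableEq n] {x y : n → ℝ}
    {A : Matrix n n ℝ} {s₀ : ℝ} (h : ∀ᶠ s in 𝓝 s₀, x ⬝ᵥ exp (s • A) *ᵥ y = 0) (k : ℕ) :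
    x ⬝ᵥ (A ^ k) *ᵥ y = 0 := by
  have hzero : ∀ s, x ⬝ᵥ exp (s • A) *ᵥ y = 0 := fun s =>
    AnalyticOnNhd.eqOn_zero_of_preconnected_of_eventuallyEq_zero
      (fun s _ => analyticAt_dotProduct_exp_smul_mulVec x y A s) isPreconnected_univ
      (mem_univ s₀) h (mem_univ s)
  have hpow : ∀ (k : ℕ) (s : ℝ), x ⬝ᵥ (A ^ k * exp (s • A)) *ᵥ y = 0 := by
    intro k
    induction k with
    | zero => simpa using hzero
    | succ k ih =>
      intro s
      have hderiv := hasDerivAt_dotProduct_mul_exp_smul_mulVec x y (A ^ k) A s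
      rw [funext ih, ← pow_succ] at hderiv
      exact hderiv.unique (hasDerivAt_const s 0)
  simpa using hpow k 0

variable [DecidableEq n] [DecidableEq m] {x : n → ℝ} {y : m → ℝ} {A : Matrix n n ℝ}
  {A' : Matrix m m ℝ} {M : Matrix n m ℝ}

theorem continuous_dotProduct_exp_mul_exp_mulVec :
    Continuous (Function.uncurry fun s t : ℝ => x ⬝ᵥ (exp (s • A) * M * exp (t • A')) *ᵥ y) :=
  continuous_const.dotProduct <| ((((continuous_exp_smul A).comp continuous_fst).matrix_mul
    continuous_const).matrix_mul ((continuous_exp_smul A').comp continuous_snd)).matrix_mulVec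
    continuous_const

theorem dotProduct_pow_mul_pow_mulVec_eq_zero_of_eventually {s₀ t₀ : ℝ}
    (h : ∀ᶠ t in 𝓝 t₀, ∀ᶠ s in 𝓝 s₀, x ⬝ᵥ (exp (s • A) * M * exp (t • A')) *ᵥ y = 0)
    (α β : ℕ) : x ⬝ᵥ (A ^ α * M * A' ^ β) *ᵥ y = 0 := by
  have hα : ∀ᶠ t in 𝓝 t₀, (x ᵥ* (A ^ α * M)) ⬝ᵥ exp (t • A') *ᵥ y = 0 := by
    filter_upwards [h] with t ht
    have := dotProduct_pow_mulVec_eq_zero_of_eventually (y := (M * exp (t • A')) *ᵥ y)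
      (ht.mono fun s hs => by rwa [mulVec_mulVec, ← Matrix.mul_assoc]) α
    rwa [← dotProduct_mulVec, mulVec_mulVec, Matrix.mul_assoc, ← mulVec_mulVec]
  simpa only [← dotProduct_mulVec, mulVec_mulVec] using
    dotProduct_pow_mulVec_eq_zero_of_eventually hα β

theorem dotProduct_exp_mul_exp_mulVec_eq_zero
    (h : ∀ α < Fintype.card n, ∀ β < Fintype.card m, x ⬝ᵥ (A ^ α * M * A' ^ β) *ᵥ y = 0)
    (s t : ℝ) : x ⬝ᵥ (exp (s • A) * M * exp (t • A')) *ᵥ y = 0 := by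
  have hβ : ∀ β < Fintype.card m, x ⬝ᵥ (exp (s • A) * M * A' ^ β) *ᵥ y = 0 := by
    intro β hβ
    rw [Matrix.mul_assoc, ← mulVec_mulVec]
    refine dotProduct_mulVec_eq_zero_of_mem_span ?_ (exp_smul_mem_span_pow_lt_card A s)
    rintro _ ⟨α, hα, rfl⟩
    rw [mulVec_mulVec, ← Matrix.mul_assoc]
    exact h α hα β hβ
  rw [← mulVec_mulVec, dotProduct_mulVec]
  refine dotProduct_mulVec_eq_zero_of_mem_span ?_ (exp_smul_mem_span_pow_lt_card A' t)
  rintro _ ⟨β, hβ', rfl⟩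
  rw [← dotProduct_mulVec, mulVec_mulVec]
  exact hβ β hβ'

end Matrix

theorem covariance_integral_zero_iff_powers_general {d k : ℕ}
    (A : Matrix (Fin d) (Fin d) ℝ) (B : Matrix (Fin d) (Fin k) ℝ)
    (Sig : Matrix (Fin k) (Fin k) ℝ)
    (u v : Fin d → ℝ) :
    (∀ h ∈ Set.Icc (0 : ℝ) 1, ∀ h' ∈ Set.Icc (0 : ℝ) 1,
        ∫ s in (0 : ℝ)..(min h h'),
          u ⬝ᵥ ((exp ((h - s) • A) * B * Sig * Bᵀ * exp ((h' - s) • Aᵀ)).mulVec v) = 0) ↔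
      (∀ α < d, ∀ β < d, u ⬝ᵥ ((A ^ α * B * Sig * Bᵀ * (Aᵀ) ^ β).mulVec v) = 0) := by
  have hassoc (X Y : Matrix (Fin d) (Fin d) ℝ) : X * B * Sig * Bᵀ * Y = X * (B * Sig * Bᵀ) * Y := by
    simp only [Matrix.mul_assoc]
  simp only [hassoc]
  constructor
  · intro hint α _ β _
    have hsquare : ∀ s ∈ Ioo (0 : ℝ) 1, ∀ t ∈ Ioo (0 : ℝ) 1,
        u ⬝ᵥ (exp (s • A) * (B * Sig * Bᵀ) * exp (t • Aᵀ)) *ᵥ v = 0 := fun s hs t ht =>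
      apply_eq_zero_of_integral_min_eq_zero continuous_dotProduct_exp_mul_exp_mulVec hint hs ht
    have hmid : Ioo (0 : ℝ) 1 ∈ 𝓝 (1 / 2) := Ioo_mem_nhds (by norm_num) (by norm_num)
    exact dotProduct_pow_mul_pow_mulVec_eq_zero_of_eventually
      (eventually_of_mem hmid fun t ht => eventually_of_mem hmid fun s hs => hsquare s hs t ht) α β
  · intro hpow h _ h' _
    have hzero : ∀ s t : ℝ, u ⬝ᵥ (exp (s • A) * (B * Sig * Bᵀ) * exp (t • Aᵀ)) *ᵥ v = 0 :=
      dotProduct_exp_mul_exp_mulVec_eq_zero (by simpa only [Fintype.card_fin] using hpow)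
    simp only [hzero, intervalIntegral.integral_zero]

/-- The integral characterisation of contemporaneous uncorrelatedness:
`∫_0^{min(h,ĥ)} uᵀ e^{(h−s)A} B Σ Bᵀ e^{(ĥ−s)Aᵀ} v ds = 0` for all `h, ĥ ∈ [0,1]` if and
only if `uᵀ Aᵅ B Σ Bᵀ (Aᵀ)ᵝ v = 0` for all `0 ≤ α, β ≤ d−1`. -/
theorem covariance_integral_zero_iff_powers {d k : ℕ}
    (A : Matrix (Fin d) (Fin d) ℝ) (B : Matrix (Fin d) (Fin k) ℝ)
    (Sig : Matrix (Fin k) (Fin k) ℝ) (hSig : Sig.PosSemidef)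
    (u v : Fin d → ℝ) :
    (∀ h ∈ Set.Icc (0 : ℝ) 1, ∀ h' ∈ Set.Icc (0 : ℝ) 1,
        ∫ s in (0 : ℝ)..(min h h'),
          u ⬝ᵥ ((exp ((h - s) • A) * B * Sig * Bᵀ * exp ((h' - s) • Aᵀ)).mulVec v) = 0) ↔
      (∀ α < d, ∀ β < d, u ⬝ᵥ ((A ^ α * B * Sig * Bᵀ * (Aᵀ) ^ β).mulVec v) = 0) :=
  covariance_integral_zero_iff_powers_general A B Sig u v
end
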